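/- arXiv:2204.07639 — 2 statements merged into one kernel-verified Lean document; each statement's English description precedes it below -/
import Mathlib

section
/- Let R be a graded right Artinian G-graded ring. Then every nonzero graded two-sided ideal of R contains a minimal graded left ideal. -/
open DirectSum

universe u v w

variable {G : Type u} [Group G] [DecidableEq G]
variable {R : Type v} [Ring R]

/-- `𝒜` is a `G`-grading of the ring `R`: homogeneous components are additive
subgroups, `1` is homogeneous of trivial degree, multiplication respects degrees,
and `R` is the internal direct sum of the components. -/
def IsGRing (𝒜 : G → AddSubgroup R) : Prop :=
  (1 : R) ∈ 𝒜 1 ∧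
  (∀ (g h : G) (a b : R), a ∈ 𝒜 g → b ∈ 𝒜 h → a * b ∈ 𝒜 (g * h)) ∧
  DirectSum.IsInternal 𝒜

/-- A left ideal is graded when it is spanned by its homogeneous elements. -/
def IsGradedLeftIdeal (𝒜 : G → AddSubgroup R) (I : Submodule R R) : Prop :=
  I = Submodule.span R ((I : Set R) ∩ ⋃ g, (𝒜 g : Set R))

/-- A minimal graded left ideal (a graded-simple graded left submodule of `R`). -/
def IsMinGradedLeftIdeal (𝒜 : G → AddSubgroup R) (S : Submodule R R) : Prop :=
  IsGradedLeftIdeal 𝒜 S ∧ S ≠ ⊥ ∧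
    ∀ T : Submodule R R, T ≤ S → IsGradedLeftIdeal 𝒜 T → T = ⊥ ∨ T = S

/-- A maximal graded left ideal. -/
def IsMaxGradedLeftIdeal (𝒜 : G → AddSubgroup R) (I : Submodule R R) : Prop :=
  IsGradedLeftIdeal 𝒜 I ∧ I ≠ ⊤ ∧
    ∀ J : Submodule R R, IsGradedLeftIdeal 𝒜 J → I < J → J = ⊤

/-- The graded Jacobson radical: intersection of all maximal graded left ideals. -/
def grJacobson (𝒜 : G → AddSubgroup R) : Submodule R R :=
  sInf {I : Submodule R R | IsMaxGradedLeftIdeal 𝒜 I}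

/-- Left annihilator of a subset of `R`. -/
def annLset (X : Set R) : Set R := {r : R | ∀ x ∈ X, r * x = 0}

/-- Right annihilator of a subset of `R`. -/
def annRset (X : Set R) : Set R := {r : R | ∀ x ∈ X, x * r = 0}

/-- Left annihilator of an element, as a left ideal. -/
def annLIdeal (x : R) : Submodule R R where
  carrier := {r : R | r * x = 0}
  add_mem' := by
    intro a b ha hb
    simp only [Set.mem_setOf_eq] at *
    rw [add_mul, ha, hb, add_zero]
  zero_mem' := by simp
  smul_mem' := by
    intro c a ha
    simp only [Set.mem_setOf_eq, smul_eq_mul] at *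
    rw [mul_assoc, ha, mul_zero]

/-- A left ideal is essential if it meets every nonzero left ideal nontrivially. -/
def IsEssentialLeftIdeal (I : Submodule R R) : Prop :=
  ∀ J : Submodule R R, J ≠ ⊥ → I ⊓ J ≠ ⊥

/-- Homogeneous part of degree `g` of the graded singular ideal. -/
def grSingSet (𝒜 : G → AddSubgroup R) (g : G) : Set R :=
  {x : R | x ∈ 𝒜 g ∧ IsEssentialLeftIdeal (annLIdeal x)}

/-- The graded singular ideal `Z^gr(R) = ⊕_g Z^gr(R)_g`. -/
def grSing (𝒜 : G → AddSubgroup R) : AddSubgroup R :=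
  AddSubgroup.closure (⋃ g, grSingSet 𝒜 g)

/-- `R` is graded left self-injective (graded Baer criterion): every morphism of
degree `σ` from a graded left ideal to `R` is right multiplication by an element
of degree `σ`. -/
def GrLeftSelfInjective (𝒜 : G → AddSubgroup R) : Prop :=
  ∀ I : Submodule R R, IsGradedLeftIdeal 𝒜 I → ∀ σ : G, ∀ f : I →ₗ[R] R,
    (∀ (g : G) (x : I), (x : R) ∈ 𝒜 g → f x ∈ 𝒜 (g * σ)) →
    ∃ m ∈ 𝒜 σ, ∀ x : I, f x = (x : R) * m

/-- Ascending chain condition on graded left ideals. -/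
def GrLeftNoetherian (𝒜 : G → AddSubgroup R) : Prop :=
  ∀ f : ℕ → Submodule R R, (∀ n, IsGradedLeftIdeal 𝒜 (f n)) → Monotone f →
    ∃ n, ∀ m, n ≤ m → f m = f n

/-- Descending chain condition on graded left ideals. -/
def GrLeftArtinian (𝒜 : G → AddSubgroup R) : Prop :=
  ∀ f : ℕ → Submodule R R, (∀ n, IsGradedLeftIdeal 𝒜 (f n)) → Antitone f →
    ∃ n, ∀ m, n ≤ m → f m = f n

/-- Graded von Neumann regularity. -/
def GrVNRegular (𝒜 : G → AddSubgroup R) : Prop :=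
  ∀ (g : G) (a : R), a ∈ 𝒜 g → ∃ b : R, a = a * b * a

/-- Graded semisimplicity: `R` is the sum of its minimal graded left ideals. -/
def GrSemisimple (𝒜 : G → AddSubgroup R) : Prop :=
  sSup {S : Submodule R R | IsMinGradedLeftIdeal 𝒜 S} = (⊤ : Submodule R R)

/-- `ℳ` is a `G`-grading of the left `R`-module `M`, compatible with `𝒜`. -/
def IsGModule (𝒜 : G → AddSubgroup R) {M : Type w} [AddCommGroup M] [Module R M]
    (ℳ : G → AddSubgroup M) : Prop :=
  (∀ (g h : G) (a : R) (m : M), a ∈ 𝒜 g → m ∈ ℳ h → a • m ∈ ℳ (g * h)) ∧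
  DirectSum.IsInternal ℳ

/-- A submodule is graded when it is spanned by its homogeneous elements. -/
def IsGradedSubmodule {M : Type w} [AddCommGroup M] [Module R M]
    (ℳ : G → AddSubgroup M) (N : Submodule R M) : Prop :=
  N = Submodule.span R ((N : Set M) ∩ ⋃ g, (ℳ g : Set M))

/-- A graded right ideal: an additive subgroup closed under right multiplication
and generated (as an additive subgroup) by its homogeneous elements. -/
def IsGradedRightIdealA (𝒜 : G → AddSubgroup R) (I : AddSubgroup R) : Prop :=
  (∀ x ∈ I, ∀ r : R, x * r ∈ I) ∧
  I = AddSubgroup.closure ((I : Set R) ∩ ⋃ g, (𝒜 g : Set R))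

/-- Descending chain condition on graded right ideals. -/
def GrRightArtinian (𝒜 : G → AddSubgroup R) : Prop :=
  ∀ f : ℕ → AddSubgroup R, (∀ n, IsGradedRightIdealA 𝒜 (f n)) → Antitone f →
    ∃ n, ∀ m, n ≤ m → f m = f n

/-!
Let `J` be the intersection of the maximal graded right ideals. It is a two-sided ideal, and the
descending chain condition gives a Nakayama lemma: no nonzero right ideal `P` satisfies
`P ⊆ J P`. Hence every nonzero `x` has a homogeneous multiple `y = p x ≠ 0` with `J y = 0`.

Modulo `J` every graded right ideal has a complement, so it is generated by an idempotent
modulo `J`. A graded right ideal `K ⊇ J`, minimal with `K y ≠ 0`, is then minimal over `J` and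
of the form `e R + J`, so `e r y ≠ 0` for some homogeneous `r`. In the corner `e (R/J) e` every
nonzero homogeneous element is invertible, and `R/J` is semiprime; together these show that
`R e c`, with `c = r y`, is a minimal graded left ideal.
-/

open Pointwise

def IsMulGraded (𝒜 : G → AddSubgroup R) : Prop :=
  ∀ ⦃g h : G⦄ ⦃a b : R⦄, a ∈ 𝒜 g → b ∈ 𝒜 h → a * b ∈ 𝒜 (g * h)

abbrev RightIdeal (R : Type*) [Ring R] := Submodule Rᵐᵒᵖ R

namespace GradedRightArtinian

section Decomposition

variable {ι M : Type*} [DecidableEq ι] [AddCommGroup M] {ℳ : ι → AddSubgroup M}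
  [Decomposition ℳ]

theorem exists_decompose_apply_not_mem {N : Type*} [AddCommGroup N] (f : M →+ N)
    {P : AddSubgroup N} {x : M} (hx : f x ∉ P) : ∃ i, f (decompose ℳ x i) ∉ P := by
  classical
  by_contra! h
  rw [← sum_support_decompose ℳ x, map_sum] at hx
  exact hx (sum_mem fun i _ => h i)

variable {S : Type*} [Semiring S] [Module S M]

theorem isHomogeneous_sup {p q : Submodule S M} (hp : SetLike.IsHomogeneous ℳ p)
    (hq : SetLike.IsHomogeneous ℳ q) : SetLike.IsHomogeneous ℳ (p ⊔ q) := by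
  intro i x hx
  obtain ⟨a, ha, b, hb, rfl⟩ := Submodule.mem_sup.mp hx
  rw [decompose_add, DirectSum.add_apply, AddSubgroup.coe_add]
  exact Submodule.add_mem_sup (hp i ha) (hq i hb)

theorem isHomogeneous_inf {p q : Submodule S M} (hp : SetLike.IsHomogeneous ℳ p)
    (hq : SetLike.IsHomogeneous ℳ q) : SetLike.IsHomogeneous ℳ (p ⊓ q) :=
  fun i _ hx => ⟨hp i hx.1, hq i hx.2⟩

theorem isHomogeneous_sInf {s : Set (Submodule S M)}
    (hs : ∀ p ∈ s, SetLike.IsHomogeneous ℳ p) :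
    SetLike.IsHomogeneous ℳ (sInf s) := by
  intro i x hx
  rw [Submodule.mem_sInf] at hx ⊢
  exact fun p hp => hs p hp i (hx p hp)

theorem isHomogeneous_top : SetLike.IsHomogeneous ℳ (⊤ : Submodule S M) :=
  fun _ _ _ => Submodule.mem_top

theorem isHomogeneous_bot : SetLike.IsHomogeneous ℳ (⊥ : Submodule S M) := by
  intro i x hx
  rw [(Submodule.mem_bot S).mp hx, decompose_zero]
  exact zero_mem _

end Decomposition

def RightIdeal.mulLeft (a : R) : R →ₗ[Rᵐᵒᵖ] R := DistribSMul.toLinearMap Rᵐᵒᵖ R a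

@[simp]
theorem RightIdeal.mulLeft_apply (a s : R) : RightIdeal.mulLeft a s = a * s :=
  rfl

theorem RightIdeal.mem_comap_mulLeft {K : RightIdeal R} {a s : R} :
    s ∈ K.comap (RightIdeal.mulLeft a) ↔ a * s ∈ K :=
  Iff.rfl

theorem RightIdeal.mul_mem {K : RightIdeal R} {x : R} (hx : x ∈ K) (r : R) : x * r ∈ K :=
  K.smul_mem (MulOpposite.op r) hx

theorem RightIdeal.mem_span_singleton {x y : R} :
    y ∈ Submodule.span Rᵐᵒᵖ {x} ↔ ∃ s, x * s = y := by
  rw [Submodule.mem_span_singleton]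
  exact ⟨fun ⟨a, ha⟩ => ⟨a.unop, ha⟩, fun ⟨s, hs⟩ => ⟨MulOpposite.op s, hs⟩⟩

theorem isGradedLeftIdeal_span_singleton {ι : Type*} {ℳ : ι → AddSubgroup R} {i : ι} {x : R}
    (hx : x ∈ ℳ i) : IsGradedLeftIdeal ℳ (Submodule.span R {x}) :=
  le_antisymm (Submodule.span_le.mpr <| Set.singleton_subset_iff.mpr <| Submodule.subset_span
    ⟨Submodule.mem_span_singleton_self x, Set.mem_iUnion.mpr ⟨i, hx⟩⟩)
    (Submodule.span_le.mpr Set.inter_subset_left)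

theorem IsGradedLeftIdeal.exists_mem_ne_zero {ι : Type*} {ℳ : ι → AddSubgroup R}
    {T : Submodule R R} (hT : IsGradedLeftIdeal ℳ T) (hT0 : T ≠ ⊥) :
    ∃ i, ∃ t ∈ T, t ∈ ℳ i ∧ t ≠ 0 := by
  by_contra! h
  refine hT0 (hT.trans (Submodule.span_eq_bot.mpr fun x ⟨hxT, hx⟩ => ?_))
  obtain ⟨i, hi⟩ := Set.mem_iUnion.mp hx
  exact h i x hxT hi

section Jacobson

variable {ι : Type*} [DecidableEq ι] {ℳ : ι → AddSubgroup R} [Decomposition ℳ]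

theorem isGradedRightIdealA_of_isHomogeneous {K : RightIdeal R}
    (hK : SetLike.IsHomogeneous ℳ K) : IsGradedRightIdealA ℳ K.toAddSubgroup := by
  classical
  refine ⟨fun x hx r => RightIdeal.mul_mem hx r, le_antisymm (fun x hx => ?_)
    ((AddSubgroup.closure_le _).mpr Set.inter_subset_left)⟩
  rw [← sum_support_decompose ℳ x]
  exact sum_mem fun i _ =>
    AddSubgroup.subset_closure ⟨hK i hx, Set.mem_iUnion.mpr ⟨i, SetLike.coe_mem _⟩⟩

theorem GrRightArtinian.wellFoundedLT (hart : GrRightArtinian ℳ) :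
    WellFoundedLT {K : RightIdeal R // SetLike.IsHomogeneous ℳ K} := by
  have : WellFoundedGT {K : RightIdeal R // SetLike.IsHomogeneous ℳ K}ᵒᵈ := by
    refine wellFoundedGT_iff_monotone_chain_condition.mpr fun f => ?_
    obtain ⟨n, hn⟩ := hart (fun n => (OrderDual.ofDual (f n)).1.toAddSubgroup)
      (fun n => isGradedRightIdealA_of_isHomogeneous (OrderDual.ofDual (f n)).2)
      (fun _ _ h => f.monotone h)
    exact ⟨n, fun m hm => OrderDual.ofDual.injective <| Subtype.ext <|
      (Submodule.toAddSubgroup_injective (hn m hm)).symm⟩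
  exact this

theorem GrRightArtinian.exists_minimal (hart : GrRightArtinian ℳ) {P : RightIdeal R → Prop}
    (h : ∃ K, SetLike.IsHomogeneous ℳ K ∧ P K) :
    ∃ K, Minimal (fun K => SetLike.IsHomogeneous ℳ K ∧ P K) K := by
  obtain ⟨K, hK, hPK⟩ := h
  obtain ⟨⟨M, hM⟩, hmin⟩ := (GrRightArtinian.wellFoundedLT hart).exists_minimal
    {K : {K : RightIdeal R // SetLike.IsHomogeneous ℳ K} | P K.1} ⟨⟨K, hK⟩, hPK⟩
  exact ⟨M, ⟨hM, hmin.1⟩, fun K' hK' hle => hmin.2 (y := ⟨K', hK'.1⟩) hK'.2 hle⟩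

variable (ℳ) in
def IsMaxGradedRightIdeal (m : RightIdeal R) : Prop :=
  Maximal (fun K : RightIdeal R => SetLike.IsHomogeneous ℳ K ∧ (1 : R) ∉ K) m

variable (ℳ) in
def rightGrJacobson : RightIdeal R := sInf {m | IsMaxGradedRightIdeal ℳ m}

theorem IsMaxGradedRightIdeal.one_mem_of_lt {m K : RightIdeal R} (hm : IsMaxGradedRightIdeal ℳ m)
    (hK : SetLike.IsHomogeneous ℳ K) (hlt : m < K) : (1 : R) ∈ K :=
  not_not.mp fun h => hm.not_prop_of_gt hlt ⟨hK, h⟩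

theorem exists_isMaxGradedRightIdeal_ge {N : RightIdeal R} (hN : SetLike.IsHomogeneous ℳ N)
    (h1 : (1 : R) ∉ N) : ∃ m, N ≤ m ∧ IsMaxGradedRightIdeal ℳ m := by
  refine zorn_le_nonempty₀ {K | SetLike.IsHomogeneous ℳ K ∧ (1 : R) ∉ K}
    (fun c hc hchain K hK => ?_) N ⟨hN, h1⟩
  have hmem : ∀ {x : R}, x ∈ sSup c ↔ ∃ K ∈ c, x ∈ K := fun {x} =>
    Submodule.mem_sSup_of_directed ⟨K, hK⟩ hchain.directedOn
  refine ⟨sSup c, ⟨fun i x hx => ?_, fun h => ?_⟩, fun _ => le_sSup⟩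
  · obtain ⟨K, hKc, hxK⟩ := hmem.mp hx
    exact hmem.mpr ⟨K, hKc, (hc hKc).1 i hxK⟩
  · obtain ⟨K, hKc, h1K⟩ := hmem.mp h
    exact (hc hKc).2 h1K

theorem rightGrJacobson_le {m : RightIdeal R} (hm : IsMaxGradedRightIdeal ℳ m) :
    rightGrJacobson ℳ ≤ m :=
  sInf_le hm

theorem mem_rightGrJacobson {x : R} :
    x ∈ rightGrJacobson ℳ ↔ ∀ m, IsMaxGradedRightIdeal ℳ m → x ∈ m :=
  Submodule.mem_sInf

theorem exists_isMaxGradedRightIdeal_not_mem {x : R} (hx : x ∉ rightGrJacobson ℳ) :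
    ∃ m, IsMaxGradedRightIdeal ℳ m ∧ x ∉ m := by
  simpa [mem_rightGrJacobson] using hx

theorem isHomogeneous_rightGrJacobson : SetLike.IsHomogeneous ℳ (rightGrJacobson ℳ) :=
  isHomogeneous_sInf fun _ hm => hm.1.1

theorem GrRightArtinian.exists_complement (hart : GrRightArtinian ℳ) {L : RightIdeal R}
    (hL : SetLike.IsHomogeneous ℳ L) :
    ∃ L', SetLike.IsHomogeneous ℳ L' ∧ (1 : R) ∈ L ⊔ L' ∧
      L ⊓ L' ≤ rightGrJacobson ℳ := by
  obtain ⟨L', ⟨hL', hJL', h1⟩, hmin⟩ := GrRightArtinian.exists_minimal hart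
    (P := fun L' => rightGrJacobson ℳ ≤ L' ∧ (1 : R) ∈ L ⊔ L')
    ⟨⊤, isHomogeneous_top, le_top, Submodule.mem_sup_right Submodule.mem_top⟩
  refine ⟨L', hL', h1, fun x hx => mem_rightGrJacobson.mpr fun m hm => ?_⟩
  by_contra hxm
  -- otherwise `L' ⊓ m` would be a smaller complement of `L`
  obtain ⟨a, ha, b, hb, hab⟩ := Submodule.mem_sup.mp <| hm.one_mem_of_lt
    (isHomogeneous_sup (isHomogeneous_inf hL hL') hm.1.1) (right_lt_sup.mpr fun h => hxm (h hx))
  obtain ⟨l, hl, l', hl', hll'⟩ := Submodule.mem_sup.mp h1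
  have hbl' : b * l' ∈ L' ⊓ m := by
    refine ⟨?_, RightIdeal.mul_mem hb l'⟩
    rw [eq_sub_of_add_eq' hab, sub_mul, one_mul]
    exact sub_mem hl' (RightIdeal.mul_mem ha.2 l')
  have h1' : (1 : R) ∈ L ⊔ L' ⊓ m := by
    rw [← hll', ← one_mul l', ← hab, add_mul, ← add_assoc]
    exact Submodule.add_mem_sup (add_mem hl (RightIdeal.mul_mem ha.1 l')) hbl'
  exact hxm (hmin ⟨isHomogeneous_inf hL' hm.1.1, le_inf hJL' (rightGrJacobson_le hm), h1'⟩
    inf_le_left hx.2).2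

theorem GrRightArtinian.exists_idempotent_mod [One ι] (hart : GrRightArtinian ℳ)
    (h1 : (1 : R) ∈ ℳ 1) {K : RightIdeal R} (hK : SetLike.IsHomogeneous ℳ K) :
    ∃ e ∈ ℳ 1, e ∈ K ∧ ∀ k ∈ K, k - e * k ∈ rightGrJacobson ℳ := by
  obtain ⟨L', hL', hKL', hinf⟩ := GrRightArtinian.exists_complement hart hK
  obtain ⟨e₀, he₀, f₀, hf₀, hef₀⟩ := Submodule.mem_sup.mp hKL'
  have hef : (decompose ℳ e₀ 1 : R) + decompose ℳ f₀ 1 = 1 := by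
    rw [← AddSubgroup.coe_add, ← DirectSum.add_apply, ← decompose_add, hef₀,
      decompose_of_mem_same ℳ h1]
  refine ⟨_, SetLike.coe_mem _, hK 1 he₀, fun k hk => hinf ⟨?_, ?_⟩⟩
  · exact sub_mem hk (RightIdeal.mul_mem (hK 1 he₀) k)
  · rw [show k - (decompose ℳ e₀ 1 : R) * k = decompose ℳ f₀ 1 * k by
      rw [eq_sub_of_add_eq' hef]; noncomm_ring]
    exact RightIdeal.mul_mem (hL' 1 hf₀) k

end Jacobson

section GroupGraded

variable {𝒜 : G → AddSubgroup R} [Decomposition 𝒜]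

local notation "J" => rightGrJacobson 𝒜

theorem coe_decompose_mul_of_left_mem (hmul : IsMulGraded 𝒜) {d : G} {a : R} (ha : a ∈ 𝒜 d)
    (b : R) (g : G) : (decompose 𝒜 (a * b) g : R) = a * decompose 𝒜 b (d⁻¹ * g) := by
  classical
  conv_lhs => rw [← sum_support_decompose 𝒜 b, Finset.mul_sum, decompose_sum]
  rw [DFinsupp.finsetSum_apply, AddSubgroup.val_finsetSum]
  have hterm : ∀ k, (decompose 𝒜 (a * decompose 𝒜 b k) g : R) =
      if k = d⁻¹ * g then a * decompose 𝒜 b k else 0 := by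
    intro k
    have hmem := hmul ha (decompose 𝒜 b k).2
    split_ifs with hk
    · subst hk; rw [mul_inv_cancel_left] at hmem; exact decompose_of_mem_same 𝒜 hmem
    · exact decompose_of_mem_ne 𝒜 hmem (by rintro rfl; simp at hk)
  simp only [hterm, Finset.sum_ite_eq', DFinsupp.mem_support_iff, ne_eq, ite_not]
  split_ifs with h
  · rw [h, ZeroMemClass.coe_zero, mul_zero]
  · rfl

theorem coe_decompose_mul_of_right_mem (hmul : IsMulGraded 𝒜) {d : G} {b : R} (hb : b ∈ 𝒜 d)
    (a : R) (g : G) : (decompose 𝒜 (a * b) g : R) = decompose 𝒜 a (g * d⁻¹) * b := by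
  classical
  conv_lhs => rw [← sum_support_decompose 𝒜 a, Finset.sum_mul, decompose_sum]
  rw [DFinsupp.finsetSum_apply, AddSubgroup.val_finsetSum]
  have hterm : ∀ k, (decompose 𝒜 (decompose 𝒜 a k * b) g : R) =
      if k = g * d⁻¹ then decompose 𝒜 a k * b else 0 := by
    intro k
    have hmem := hmul (decompose 𝒜 a k).2 hb
    split_ifs with hk
    · subst hk; rw [inv_mul_cancel_right] at hmem; exact decompose_of_mem_same 𝒜 hmem
    · exact decompose_of_mem_ne 𝒜 hmem (by rintro rfl; simp at hk)
  simp only [hterm, Finset.sum_ite_eq', DFinsupp.mem_support_iff, ne_eq, ite_not]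
  split_ifs with h
  · rw [h, ZeroMemClass.coe_zero, zero_mul]
  · rfl

theorem coe_decompose_mul_mem (hmul : IsMulGraded 𝒜) {a b : R} {Q : AddSubgroup R}
    (h : ∀ g h, (decompose 𝒜 a g : R) * decompose 𝒜 b h ∈ Q) (g : G) :
    (decompose 𝒜 (a * b) g : R) ∈ Q := by
  classical
  rw [← sum_support_decompose 𝒜 a, Finset.sum_mul, decompose_sum, DFinsupp.finsetSum_apply,
    AddSubgroup.val_finsetSum]
  exact sum_mem fun k _ => by
    rw [coe_decompose_mul_of_left_mem hmul (decompose 𝒜 a k).2]; exact h _ _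

theorem isHomogeneous_span_singleton (hmul : IsMulGraded 𝒜) {d : G} {x : R} (hx : x ∈ 𝒜 d) :
    SetLike.IsHomogeneous 𝒜 (Submodule.span Rᵐᵒᵖ {x}) := by
  intro g y hy
  obtain ⟨s, rfl⟩ := RightIdeal.mem_span_singleton.mp hy
  rw [coe_decompose_mul_of_left_mem hmul hx]
  exact RightIdeal.mem_span_singleton.mpr ⟨_, rfl⟩

theorem isHomogeneous_smul (hmul : IsMulGraded 𝒜) {d : G} {a : R} (ha : a ∈ 𝒜 d)
    {K : RightIdeal R} (hK : SetLike.IsHomogeneous 𝒜 K) :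
    SetLike.IsHomogeneous 𝒜 (a • K) := by
  intro g y hy
  obtain ⟨k, hk, rfl⟩ := Submodule.mem_smul_pointwise_iff_exists _ _ _ |>.mp hy
  rw [smul_eq_mul, coe_decompose_mul_of_left_mem hmul ha]
  exact Submodule.smul_mem_pointwise_smul _ _ _ (hK _ hk)

theorem isHomogeneous_comap_mulLeft (hmul : IsMulGraded 𝒜) {d : G} {a : R} (ha : a ∈ 𝒜 d)
    {K : RightIdeal R} (hK : SetLike.IsHomogeneous 𝒜 K) :
    SetLike.IsHomogeneous 𝒜 (K.comap (RightIdeal.mulLeft a)) := by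
  intro g y hy
  rw [RightIdeal.mem_comap_mulLeft] at hy ⊢
  have := hK (d * g) hy
  rwa [coe_decompose_mul_of_left_mem hmul ha, inv_mul_cancel_left] at this

theorem isHomogeneous_span_mul (hmul : IsMulGraded 𝒜) {A B : RightIdeal R}
    (hA : SetLike.IsHomogeneous 𝒜 A) (hB : SetLike.IsHomogeneous 𝒜 B) :
    SetLike.IsHomogeneous 𝒜 (Submodule.span Rᵐᵒᵖ ((A : Set R) * (B : Set R))) := by
  intro g z hz
  induction hz using Submodule.span_induction generalizing g with
  | mem z hz =>
    obtain ⟨a, ha, b, hb, rfl⟩ := Set.mem_mul.mp hz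
    exact coe_decompose_mul_mem hmul (Q := (Submodule.span Rᵐᵒᵖ _).toAddSubgroup)
      (fun _ _ => Submodule.subset_span (Set.mul_mem_mul (hA _ ha) (hB _ hb))) g
  | zero => rw [decompose_zero]; exact zero_mem _
  | add x y _ _ hx hy =>
    rw [decompose_add, DirectSum.add_apply, AddSubgroup.coe_add]; exact add_mem (hx g) (hy g)
  | smul r x _ hx =>
    rw [MulOpposite.smul_eq_mul_unop]
    exact coe_decompose_mul_mem hmul (Q := (Submodule.span Rᵐᵒᵖ _).toAddSubgroup)
      (fun h _ => RightIdeal.mul_mem (hx h) _) g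

theorem IsMaxGradedRightIdeal.comap_mulLeft (hmul : IsMulGraded 𝒜) {m : RightIdeal R}
    (hm : IsMaxGradedRightIdeal 𝒜 m) {d : G} {u : R} (hu : u ∈ 𝒜 d) (hum : u ∉ m) :
    IsMaxGradedRightIdeal 𝒜 (m.comap (RightIdeal.mulLeft u)) := by
  refine ⟨⟨isHomogeneous_comap_mulLeft hmul hu hm.1.1,
    fun h => hum (by simpa using RightIdeal.mem_comap_mulLeft.mp h)⟩,
    fun K ⟨hK, h1K⟩ hle => not_not.mp fun hKN => h1K ?_⟩
  obtain ⟨y, hyK, hyN⟩ := SetLike.not_le_iff_exists.mp hKN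
  obtain ⟨g, hg⟩ := exists_decompose_apply_not_mem (ℳ := 𝒜) (AddMonoidHom.mulLeft u)
    (P := m.toAddSubgroup) (x := y) hyN
  set k := (decompose 𝒜 y g : R)
  obtain ⟨w, hw, z, hz, hwz⟩ := Submodule.mem_sup.mp <|
    hm.one_mem_of_lt (isHomogeneous_sup hm.1.1 (isHomogeneous_span_singleton hmul
      (hmul hu (decompose 𝒜 y g).2)))
      (left_lt_sup.mpr fun h => hg (h (Submodule.mem_span_singleton_self _)))
  obtain ⟨s, rfl⟩ := RightIdeal.mem_span_singleton.mp hz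
  have hu1 : u * (1 - k * (s * u)) = w * u := by
    calc u * (1 - k * (s * u)) = u - (u * k * s) * u := by noncomm_ring
      _ = w * u := by rw [eq_sub_of_add_eq' hwz]; noncomm_ring
  rw [show (1 : R) = (1 - k * (s * u)) + k * (s * u) by abel]
  exact add_mem (hle (RightIdeal.mem_comap_mulLeft.mpr (hu1 ▸ RightIdeal.mul_mem hw u)))
    (RightIdeal.mul_mem (hK g hyK) _)

theorem mul_mem_rightGrJacobson_left (hmul : IsMulGraded 𝒜) (r : R) {x : R}
    (hx : x ∈ J) : r * x ∈ J := by
  classical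
  rw [← sum_support_decompose 𝒜 r, Finset.sum_mul]
  refine sum_mem fun g _ => mem_rightGrJacobson.mpr fun m hm => ?_
  by_cases hu : (decompose 𝒜 r g : R) ∈ m
  · exact RightIdeal.mul_mem hu x
  · exact mem_rightGrJacobson.mp hx _ (hm.comap_mulLeft hmul (decompose 𝒜 r g).2 hu)

def grJacobsonIdeal (hmul : IsMulGraded 𝒜) : Ideal R where
  toAddSubmonoid := (rightGrJacobson 𝒜).toAddSubmonoid
  smul_mem' r _ hx := mul_mem_rightGrJacobson_left hmul r hx

instance (hmul : IsMulGraded 𝒜) : (grJacobsonIdeal hmul).IsTwoSided :=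
  ⟨fun b ha => RightIdeal.mul_mem (K := rightGrJacobson 𝒜) ha b⟩

theorem eq_zero_of_mul_eq_self (hmul : IsMulGraded 𝒜) {d : G} {a j : R} (ha : a ∈ 𝒜 d)
    (hj : j ∈ J) (h : a * j = a) : a = 0 := by
  by_contra ha0
  obtain ⟨m, hNm, hm⟩ := exists_isMaxGradedRightIdeal_ge
    (isHomogeneous_comap_mulLeft hmul ha (isHomogeneous_bot (S := Rᵐᵒᵖ)))
    (by simpa using ha0 : (1 : R) ∉ (⊥ : RightIdeal R).comap (RightIdeal.mulLeft a))
  have h1j : 1 - j ∈ m := hNm (by simp [mul_sub, h])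
  exact hm.1.2 (by simpa using add_mem h1j (rightGrJacobson_le hm hj))

theorem exists_mul_mul_not_mem_rightGrJacobson (hmul : IsMulGraded 𝒜) {d : G} {t : R}
    (ht : t ∈ 𝒜 d) (htJ : t ∉ J) : ∃ s, t * s * t ∉ J := by
  obtain ⟨m, hm, htm⟩ := exists_isMaxGradedRightIdeal_not_mem htJ
  obtain ⟨w, hw, z, hz, hwz⟩ := Submodule.mem_sup.mp <| hm.one_mem_of_lt
    (isHomogeneous_sup hm.1.1 (isHomogeneous_span_singleton hmul ht))
    (left_lt_sup.mpr fun h => htm (h (Submodule.mem_span_singleton_self t)))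
  obtain ⟨s, rfl⟩ := RightIdeal.mem_span_singleton.mp hz
  obtain rfl : w = 1 - t * s := eq_sub_of_add_eq hwz
  refine ⟨s, fun hJ => hm.1.2 ?_⟩
  rw [show (1 : R) = t * s * t * s + (1 - t * s) * (1 + t * s) by noncomm_ring]
  exact add_mem (RightIdeal.mul_mem (rightGrJacobson_le hm hJ) s) (RightIdeal.mul_mem hw _)

theorem GrRightArtinian.eq_bot_of_le_span_mul (hart : GrRightArtinian 𝒜)
    (hmul : IsMulGraded 𝒜) {P : RightIdeal R}
    (hP : P ≤ Submodule.span Rᵐᵒᵖ ((J : Set R) * (P : Set R))) : P = ⊥ := by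
  by_contra hP0
  obtain ⟨p, hp, hp0⟩ := Submodule.exists_mem_ne_zero_of_ne_bot hP0
  obtain ⟨A, ⟨hA, a, haA, p', hp', hap⟩, hmin⟩ := GrRightArtinian.exists_minimal hart
    (P := fun A => ∃ a ∈ A, ∃ p ∈ P, a * p ≠ 0)
    ⟨⊤, isHomogeneous_top, 1, Submodule.mem_top, p, hp, by rwa [one_mul]⟩
  obtain ⟨g, hg⟩ := exists_decompose_apply_not_mem (ℳ := 𝒜) (AddMonoidHom.mulRight p')
    (P := ⊥) (x := a) (by simpa using hap)
  set b := (decompose 𝒜 a g : R)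
  have hb : b ∈ 𝒜 g := (decompose 𝒜 a g).2
  -- `b p' ≠ 0` with `p' ∈ J P`, so `b J P ≠ 0`; minimality of `A` then forces `b J = A ∋ b`
  obtain ⟨j, hj, q, hq, hbjq⟩ : ∃ j ∈ J, ∃ q ∈ P, b * (j * q) ≠ 0 := by
    by_contra! h
    refine hg ((AddSubgroup.mem_bot).mpr ?_)
    have := (Submodule.span_le (p := (⊥ : RightIdeal R).comap (RightIdeal.mulLeft b))).mpr
      (fun _ hz => by
        obtain ⟨j, hj, q, hq, rfl⟩ := Set.mem_mul.mp hz
        simp [h j hj q hq]) (hP hp')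
    simpa using this
  have hAbJ : A ≤ b • J := hmin ⟨isHomogeneous_smul hmul hb isHomogeneous_rightGrJacobson,
      b * j, Submodule.smul_mem_pointwise_smul _ _ _ hj, q, hq, by rwa [← mul_assoc] at hbjq⟩
    fun _ hz => by
      obtain ⟨j, -, rfl⟩ := Submodule.mem_smul_pointwise_iff_exists _ _ _ |>.mp hz
      exact RightIdeal.mul_mem (hA g haA) j
  obtain ⟨j', hj', hbj'⟩ :=
    Submodule.mem_smul_pointwise_iff_exists _ _ _ |>.mp (hAbJ (hA g haA))
  refine hg ((AddSubgroup.mem_bot).mpr ?_)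
  simp [b, eq_zero_of_mul_eq_self hmul hb hj' hbj']

theorem GrRightArtinian.exists_mul_ne_zero_annihilated (hart : GrRightArtinian 𝒜)
    (hmul : IsMulGraded 𝒜) {x : R} (hx : x ≠ 0) :
    ∃ g, ∃ p ∈ 𝒜 g, p * x ≠ 0 ∧ ∀ j ∈ J, j * (p * x) = 0 := by
  obtain ⟨P, ⟨hP, hJP, p, hp, hpx⟩, hmin⟩ := GrRightArtinian.exists_minimal hart
    (P := fun P => (∀ j ∈ J, ∀ p ∈ P, j * p ∈ P) ∧ ∃ p ∈ P, p * x ≠ 0)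
    ⟨⊤, isHomogeneous_top, fun _ _ _ _ => Submodule.mem_top, 1, Submodule.mem_top,
      by rwa [one_mul]⟩
  set Q := Submodule.span Rᵐᵒᵖ ((J : Set R) * (P : Set R))
  have hQP : Q ≤ P := Submodule.span_le.mpr fun _ hz => by
    obtain ⟨j, hj, q, hq, rfl⟩ := Set.mem_mul.mp hz
    exact hJP j hj q hq
  have hJQ : ∀ j ∈ J, ∀ q ∈ Q, j * q ∈ Q := fun j hj q hq =>
    (Submodule.span_le (p := Q.comap (RightIdeal.mulLeft j))).mpr (fun _ hz => by
      obtain ⟨j', hj', p', hp', rfl⟩ := Set.mem_mul.mp hz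
      show j * (j' * p') ∈ Q
      rw [← mul_assoc]
      exact Submodule.subset_span (Set.mul_mem_mul (RightIdeal.mul_mem hj j') hp')) hq
  -- by minimality `Q x ≠ 0` would give `P = Q = J P`, which is impossible by Nakayama
  have hQx : ∀ q ∈ Q, q * x = 0 := by
    by_contra! h
    obtain ⟨q, hq, hqx⟩ := h
    have hPQ : P ≤ Q :=
      hmin ⟨isHomogeneous_span_mul hmul isHomogeneous_rightGrJacobson hP, hJQ, q, hq, hqx⟩ hQP
    obtain rfl := GrRightArtinian.eq_bot_of_le_span_mul hart hmul hPQ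
    exact hpx (by rw [(Submodule.mem_bot _).mp hp, zero_mul])
  obtain ⟨g, hg⟩ := exists_decompose_apply_not_mem (ℳ := 𝒜) (AddMonoidHom.mulRight x)
    (P := ⊥) (x := p) (by simpa using hpx)
  refine ⟨g, _, (decompose 𝒜 p g).2, by simpa using hg, fun j hj => ?_⟩
  rw [← mul_assoc]
  exact hQx _ (Submodule.subset_span (Set.mul_mem_mul hj (hP g hp)))

theorem mem_rightGrJacobson_of_idempotent_mod (hmul : IsMulGraded 𝒜) {e x : R}
    (he : e - e * e ∈ J) (hx : e * x ∈ J) (h : e ∈ Submodule.span Rᵐᵒᵖ {x} ⊔ J) :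
    e ∈ J := by
  obtain ⟨z, hz, j, hj, hzj⟩ := Submodule.mem_sup.mp h
  obtain ⟨r, rfl⟩ := RightIdeal.mem_span_singleton.mp hz
  rw [show e = (e - e * e) + e * x * r + e * j by
    calc e = (e - e * e) + e * e := by abel
      _ = (e - e * e) + e * (x * r + j) := by rw [hzj]
      _ = _ := by noncomm_ring]
  exact add_mem (add_mem he (RightIdeal.mul_mem hx r)) (mul_mem_rightGrJacobson_left hmul e hj)

theorem GrRightArtinian.exists_minimal_mul_ne_zero (hart : GrRightArtinian 𝒜)
    (hmul : IsMulGraded 𝒜) (h1 : (1 : R) ∈ 𝒜 1) {y : R} (hy : y ≠ 0)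
    (hJy : ∀ j ∈ J, j * y = 0) :
    ∃ K, Minimal (fun L => SetLike.IsHomogeneous 𝒜 L ∧ J < L) K ∧
      ∃ k ∈ K, k * y ≠ 0 := by
  obtain ⟨K, ⟨hK, hJK, k, hk, hky⟩, hmin⟩ := GrRightArtinian.exists_minimal hart
    (P := fun K => J ≤ K ∧ ∃ k ∈ K, k * y ≠ 0)
    ⟨⊤, isHomogeneous_top, le_top, 1, Submodule.mem_top, by rwa [one_mul]⟩
  refine ⟨K, ⟨⟨hK, lt_of_le_of_ne hJK (by rintro rfl; exact hky (hJy k hk))⟩,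
    fun L ⟨hL, hJL⟩ hLK => ?_⟩, k, hk, hky⟩
  by_cases hLy : ∀ l ∈ L, l * y = 0
  swap
  · exact hmin ⟨hL, hJL.le, by simpa using hLy⟩ hLK
  exfalso
  obtain ⟨e, he1, heK, he⟩ := GrRightArtinian.exists_idempotent_mod hart h1 hK
  obtain ⟨e₁, he₁1, he₁L, he₁⟩ := GrRightArtinian.exists_idempotent_mod hart h1 hL
  -- `K ≤ L ⊔ L₂` and `L y = 0`, so minimality of `K` gives `K = L₂`
  set L₂ := Submodule.span Rᵐᵒᵖ {e - e₁ * e} ⊔ J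
  have hL₂K : L₂ ≤ K := sup_le (Submodule.span_singleton_le_iff_mem _ _ |>.mpr
    (sub_mem heK (RightIdeal.mul_mem (hLK he₁L) e))) hJK
  have hKL₂ : K ≤ L₂ := by
    refine hmin ⟨isHomogeneous_sup (isHomogeneous_span_singleton hmul
      (sub_mem he1 (by simpa using hmul he₁1 he1))) isHomogeneous_rightGrJacobson,
      le_sup_right, (e - e₁ * e) * k,
      Submodule.mem_sup_left (RightIdeal.mem_span_singleton.mpr ⟨k, rfl⟩),
      fun h0 => hky ?_⟩ hL₂K
    rw [show k * y = (k - e * k) * y + e₁ * (e * k) * y + (e - e₁ * e) * k * y by noncomm_ring,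
      hJy _ (he k hk), hLy _ (RightIdeal.mul_mem he₁L _), h0, zero_add, add_zero]
  have he₁J : e₁ ∈ J := mem_rightGrJacobson_of_idempotent_mod hmul (he₁ e₁ he₁L)
    (by rw [mul_sub, ← mul_assoc, ← sub_mul]; exact RightIdeal.mul_mem (he₁ e₁ he₁L) e)
    (hKL₂ (hLK he₁L))
  refine hJL.not_ge fun l hl => ?_
  rw [show l = (l - e₁ * l) + e₁ * l by abel]
  exact add_mem (he₁ l hl) (RightIdeal.mul_mem he₁J l)

variable (𝒜) in
def IsPrimitiveIdempotentMod (e : R) : Prop :=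
  e ∈ 𝒜 1 ∧ e * e - e ∈ J ∧
    Minimal (fun L => SetLike.IsHomogeneous 𝒜 L ∧ J < L) (Submodule.span Rᵐᵒᵖ {e} ⊔ J)

theorem GrRightArtinian.exists_isPrimitiveIdempotentMod_mul_ne_zero (hart : GrRightArtinian 𝒜)
    (hmul : IsMulGraded 𝒜) (h1 : (1 : R) ∈ 𝒜 1) {y : R} (hy : y ≠ 0)
    (hJy : ∀ j ∈ J, j * y = 0) :
    ∃ e, IsPrimitiveIdempotentMod 𝒜 e ∧ ∃ g, ∃ r ∈ 𝒜 g, e * r * y ≠ 0 := by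
  obtain ⟨K, hK, k, hk, hky⟩ := GrRightArtinian.exists_minimal_mul_ne_zero hart hmul h1 hy hJy
  obtain ⟨e, he1, heK, he⟩ := GrRightArtinian.exists_idempotent_mod hart h1 hK.1.1
  have hKe : Submodule.span Rᵐᵒᵖ {e} ⊔ J = K := by
    refine le_antisymm (sup_le (Submodule.span_singleton_le_iff_mem _ _ |>.mpr heK) hK.1.2.le)
      fun k hk => ?_
    rw [show k = e * k + (k - e * k) by abel]
    exact Submodule.add_mem_sup (RightIdeal.mem_span_singleton.mpr ⟨k, rfl⟩) (he k hk)
  have heky : e * k * y ≠ 0 := fun h => hky <| by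
    rw [show k * y = (k - e * k) * y + e * k * y by noncomm_ring, hJy _ (he k hk), h, add_zero]
  obtain ⟨g, hg⟩ := exists_decompose_apply_not_mem (ℳ := 𝒜)
    ((AddMonoidHom.mulLeft e).comp (AddMonoidHom.mulRight y)) (P := ⊥) (x := k)
    (by simpa [mul_assoc] using heky)
  refine ⟨e, ⟨he1, ?_, hKe ▸ hK⟩, g, _, (decompose 𝒜 k g).2,
    by simpa [mul_assoc] using hg⟩
  simpa using neg_mem (he e heK)

end GroupGraded

section Corner

variable {𝒜 : G → AddSubgroup R} [Decomposition 𝒜] (hmul : IsMulGraded 𝒜) {e : R}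

local notation "J" => rightGrJacobson 𝒜
local notation "π" => Ideal.Quotient.mk (grJacobsonIdeal hmul)

theorem mk_eq_zero_iff {x : R} : π x = 0 ↔ x ∈ J := Ideal.Quotient.eq_zero_iff_mem

theorem IsPrimitiveIdempotentMod.mk_mul_self (he : IsPrimitiveIdempotentMod 𝒜 e) :
    π e * π e = π e := by
  rw [← map_mul, Ideal.Quotient.mk_eq_mk_iff_sub_mem]; exact he.2.1

theorem IsPrimitiveIdempotentMod.mk_ne_zero (he : IsPrimitiveIdempotentMod 𝒜 e) : π e ≠ 0 :=
  fun heJ => he.2.2.1.2.ne' <| sup_eq_right.mpr <|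
    Submodule.span_singleton_le_iff_mem _ _ |>.mpr ((mk_eq_zero_iff hmul).mp heJ)

theorem IsPrimitiveIdempotentMod.exists_mul_eq (he : IsPrimitiveIdempotentMod 𝒜 e) {d : G}
    {r : R} (hr : e * r ∈ 𝒜 d) (hrJ : π (e * r) ≠ 0) :
    ∃ v ∈ 𝒜 d⁻¹, π (e * r) * π v = π e := by
  rw [Ne, mk_eq_zero_iff] at hrJ
  have hle : Submodule.span Rᵐᵒᵖ {e} ⊔ J ≤ Submodule.span Rᵐᵒᵖ {e * r} ⊔ J :=
    he.2.2.2
      ⟨isHomogeneous_sup (isHomogeneous_span_singleton hmul hr) isHomogeneous_rightGrJacobson,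
        lt_of_le_of_ne le_sup_right fun h =>
          hrJ (h ▸ Submodule.mem_sup_left (Submodule.mem_span_singleton_self _))⟩
      (sup_le_sup_right (Submodule.span_singleton_le_iff_mem _ _ |>.mpr
        (RightIdeal.mem_span_singleton.mpr ⟨r, rfl⟩)) _)
  obtain ⟨z, hz, j, hj, hzj⟩ :=
    Submodule.mem_sup.mp (hle (Submodule.mem_sup_left (Submodule.mem_span_singleton_self e)))
  obtain ⟨s, rfl⟩ := RightIdeal.mem_span_singleton.mp hz
  have hsJ : e * r * s - e ∈ J := by
    rw [eq_sub_of_add_eq hzj, sub_sub_cancel_left]; exact neg_mem hj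
  refine ⟨_, (decompose 𝒜 s d⁻¹).2, ?_⟩
  rw [← map_mul, Ideal.Quotient.mk_eq_mk_iff_sub_mem]
  have := isHomogeneous_rightGrJacobson 1 hsJ
  rwa [decompose_sub, DirectSum.sub_apply, AddSubgroup.coe_sub, decompose_of_mem_same 𝒜 he.1,
    coe_decompose_mul_of_left_mem hmul hr, mul_one] at this

theorem IsPrimitiveIdempotentMod.exists_mul_eq_left_of_corner
    (he : IsPrimitiveIdempotentMod 𝒜 e) {d : G} {r : R} (hr : e * r ∈ 𝒜 d)
    (hrJ : π (e * r) ≠ 0) (hre : π (e * r) * π e = π (e * r)) :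
    ∃ u, π u * π (e * r) = π e := by
  set x := e * r
  obtain ⟨v, hv, hxv⟩ := he.exists_mul_eq hmul hr hrJ
  -- replacing `v` by `e v e` puts the right inverse into the corner `e R e`
  have hv' : e * (v * e) ∈ 𝒜 d⁻¹ := by simpa using hmul he.1 (hmul hv he.1)
  have hv'e : π (e * (v * e)) * π e = π (e * (v * e)) := by
    simp only [map_mul, mul_assoc, he.mk_mul_self]
  have hxv' : π x * π (e * (v * e)) = π e := by
    calc π x * π (e * (v * e)) = π x * π e * π v * π e := by simp only [map_mul, mul_assoc]
      _ = π e := by rw [hre, hxv, he.mk_mul_self]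
  obtain ⟨w, -, hv'w⟩ := he.exists_mul_eq hmul hv'
    (fun h => he.mk_ne_zero hmul (by rw [← hxv', h, mul_zero]))
  have hx_eq : π x = π e * π w :=
    calc π x = π x * (π (e * (v * e)) * π w) := by rw [hv'w, hre]
      _ = π e * π w := by rw [← mul_assoc, hxv']
  exact ⟨e * (v * e), by rw [hx_eq, ← mul_assoc, hv'e, hv'w]⟩

theorem IsPrimitiveIdempotentMod.exists_mul_eq_left (he : IsPrimitiveIdempotentMod 𝒜 e)
    {d : G} {t : R} (ht : t ∈ 𝒜 d) (htJ : π t ≠ 0) (hte : π t * π e = π t) :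
    ∃ u, π u * π t = π e := by
  obtain ⟨s, hs⟩ :=
    exists_mul_mul_not_mem_rightGrJacobson hmul ht (by rwa [Ne, mk_eq_zero_iff] at htJ)
  obtain ⟨g, hg⟩ := exists_decompose_apply_not_mem (ℳ := 𝒜)
    ((AddMonoidHom.mulLeft t).comp (AddMonoidHom.mulRight t))
    (P := (rightGrJacobson 𝒜).toAddSubgroup) (x := s) (by simpa [mul_assoc] using hs)
  set b := (decompose 𝒜 s g : R)
  have htbt : π t * π b * π t ≠ 0 := by
    rw [← map_mul, ← map_mul, Ne, mk_eq_zero_iff]; simpa [mul_assoc] using hg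
  have hc : e * (b * t) ∈ 𝒜 (1 * (g * d)) := hmul he.1 (hmul (decompose 𝒜 s g).2 ht)
  have hce : π (e * (b * t)) * π e = π (e * (b * t)) := by simp only [map_mul, mul_assoc, hte]
  have hcJ : π (e * (b * t)) ≠ 0 := fun h => htbt <| by
    calc π t * π b * π t = π t * π (e * (b * t)) := by simp only [map_mul, ← mul_assoc, hte]
      _ = 0 := by rw [h, mul_zero]
  obtain ⟨u, hu⟩ := he.exists_mul_eq_left_of_corner hmul hc hcJ hce
  exact ⟨u * e * b, by simpa only [map_mul, mul_assoc] using hu⟩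

end Corner

theorem IsPrimitiveIdempotentMod.isMinGradedLeftIdeal_span {𝒜 : G → AddSubgroup R}
    [Decomposition 𝒜] (hmul : IsMulGraded 𝒜) {e : R}
    (he : IsPrimitiveIdempotentMod 𝒜 e) {d : G} {c : R} (hc : c ∈ 𝒜 d)
    (hJc : ∀ j ∈ rightGrJacobson 𝒜, j * c = 0) (hec : e * c ≠ 0) :
    IsMinGradedLeftIdeal 𝒜 (Submodule.span R {e * c}) := by
  have hech : e * c ∈ 𝒜 (1 * d) := hmul he.1 hc
  refine ⟨isGradedLeftIdeal_span_singleton hech, by simpa using hec, fun T hTS hT => ?_⟩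
  rcases eq_or_ne T ⊥ with hT0 | hT0
  · exact Or.inl hT0
  refine Or.inr (le_antisymm hTS (Submodule.span_le.mpr (Set.singleton_subset_iff.mpr ?_)))
  obtain ⟨g, t, htT, htg, ht0⟩ := IsGradedLeftIdeal.exists_mem_ne_zero hT hT0
  obtain ⟨s, hs⟩ := Submodule.mem_span_singleton.mp (hTS htT)
  set v := (decompose 𝒜 s (g * (1 * d)⁻¹) : R)
  have hvt : v * e * c = t := by
    rw [mul_assoc, ← coe_decompose_mul_of_right_mem hmul hech, ← smul_eq_mul, hs,
      decompose_of_mem_same 𝒜 htg]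
  have hveJ : Ideal.Quotient.mk (grJacobsonIdeal hmul) (v * e) ≠ 0 := by
    rw [Ne, mk_eq_zero_iff]
    exact fun h => ht0 (by rw [← hvt, hJc _ h])
  obtain ⟨u, hu⟩ := he.exists_mul_eq_left hmul (hmul (decompose 𝒜 s _).2 he.1) hveJ
    (by rw [map_mul, mul_assoc, he.mk_mul_self])
  rw [← map_mul, Ideal.Quotient.mk_eq_mk_iff_sub_mem] at hu
  have hect : e * c = u * t := by
    rw [← sub_eq_zero, ← hvt, show e * c - u * (v * e * c) = -((u * (v * e) - e) * c) by
      noncomm_ring, hJc _ hu, neg_zero]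
  rw [hect]
  exact T.smul_mem u htT

end GradedRightArtinian

open GradedRightArtinian in
theorem nonzero_graded_ideal_contains_minimal_graded_left_ideal_general
    (𝒜 : G → AddSubgroup R) (h𝒜 : IsGRing 𝒜) (hart : GrRightArtinian 𝒜)
    (I : Submodule R R) (hIgr : IsGradedLeftIdeal 𝒜 I) (hIne : I ≠ ⊥) :
    ∃ S : Submodule R R, S ≤ I ∧ IsMinGradedLeftIdeal 𝒜 S := by
  let _ := h𝒜.2.2.chooseDecomposition
  have hmul : IsMulGraded 𝒜 := fun g h a b => h𝒜.2.1 g h a b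
  obtain ⟨d, x, hxI, hx, hx0⟩ := IsGradedLeftIdeal.exists_mem_ne_zero hIgr hIne
  obtain ⟨g, p, hp, hpx, hJpx⟩ := GrRightArtinian.exists_mul_ne_zero_annihilated hart hmul hx0
  obtain ⟨e, he, g', r, hr, her⟩ :=
    GrRightArtinian.exists_isPrimitiveIdempotentMod_mul_ne_zero hart hmul h𝒜.1 hpx hJpx
  refine ⟨Submodule.span R {e * (r * (p * x))}, ?_, he.isMinGradedLeftIdeal_span hmul
    (hmul hr (hmul hp hx)) (fun j hj => ?_) (by rwa [← mul_assoc])⟩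
  · rw [Submodule.span_singleton_le_iff_mem, ← mul_assoc, ← mul_assoc]
    exact I.smul_mem (e * r * p) hxI
  · rw [← mul_assoc]
    exact hJpx _ (RightIdeal.mul_mem hj r)

/-- in a graded right Artinian graded ring, every nonzero graded
two-sided ideal contains a minimal graded left ideal. -/
theorem nonzero_graded_ideal_contains_minimal_graded_left_ideal
    (𝒜 : G → AddSubgroup R) (h𝒜 : IsGRing 𝒜) (hart : GrRightArtinian 𝒜)
    (I : Submodule R R) (hIgr : IsGradedLeftIdeal 𝒜 I)
    (hIright : ∀ x ∈ I, ∀ r : R, x * r ∈ I) (hIne : I ≠ ⊥) :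
    ∃ S : Submodule R R, S ≤ I ∧ IsMinGradedLeftIdeal 𝒜 S :=
  nonzero_graded_ideal_contains_minimal_graded_left_ideal_general 𝒜 h𝒜 hart I hIgr hIne
end

section
/- Let R be a graded left Artinian G-graded ring and P, Q graded projective left R-modules. Then P ≅ Q in the category of graded left R-modules if and only if P/J^gr(R)P ≅ Q/J^gr(R)Q as graded left R/J^gr(R)-modules. -/
open DirectSum

universe u v w

variable {G : Type u} [Group G] [DecidableEq G]
variable {R : Type v} [Ring R]

/-- `P` (with grading `Pgr`) is a projective object in the category of graded
left `R`-modules: graded lifting against surjective degree-preserving maps. -/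
def GrProjective (𝒜 : G → AddSubgroup R) {P : Type v} [AddCommGroup P] [Module R P]
    (Pgr : G → AddSubgroup P) : Prop :=
  ∀ (M N : Type v) [AddCommGroup M] [Module R M] [AddCommGroup N] [Module R N]
    (ℳ : G → AddSubgroup M) (𝒩 : G → AddSubgroup N),
    IsGModule 𝒜 ℳ → IsGModule 𝒜 𝒩 →
    ∀ p : M →ₗ[R] N, Function.Surjective p → (∀ g, ∀ x ∈ ℳ g, p x ∈ 𝒩 g) →
    ∀ f : P →ₗ[R] N, (∀ g, ∀ x ∈ Pgr g, f x ∈ 𝒩 g) →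
    ∃ h : P →ₗ[R] M, (∀ g, ∀ x ∈ Pgr g, h x ∈ ℳ g) ∧ p.comp h = f

/-- The ring `End_{R-gr}(M)` of degree-preserving `R`-linear endomorphisms,
as a subring of `Module.End R M`. -/
def grEndSub {M : Type w} [AddCommGroup M] [Module R M] (ℳ : G → AddSubgroup M) :
    Subring (Module.End R M) where
  carrier := {f : Module.End R M | ∀ g : G, ∀ x ∈ ℳ g, f x ∈ ℳ g}
  mul_mem' := by
    intro f₁ f₂ h₁ h₂ g x hx
    simp only [Module.End.mul_apply]
    exact h₁ g _ (h₂ g x hx)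
  one_mem' := by intro g x hx; simpa using hx
  add_mem' := by
    intro f₁ f₂ h₁ h₂ g x hx
    simp only [LinearMap.add_apply]
    exact (ℳ g).add_mem (h₁ g x hx) (h₂ g x hx)
  zero_mem' := by intro g x hx; simpa using (ℳ g).zero_mem
  neg_mem' := by
    intro f h g x hx
    simp only [LinearMap.neg_apply]
    exact (ℳ g).neg_mem (h g x hx)

/-- The submodule `J^gr(R)·M` of a module `M`. -/
def radSMul (𝒜 : G → AddSubgroup R) (M : Type w) [AddCommGroup M] [Module R M] :
    Submodule R M :=
  Submodule.span R {y : M | ∃ r ∈ grJacobson 𝒜, ∃ x : M, y = r • x}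

/-- The induced grading on `M / J^gr(R)·M`: images of the components of `ℳ`. -/
def quotGrading (𝒜 : G → AddSubgroup R) {M : Type w} [AddCommGroup M] [Module R M]
    (ℳ : G → AddSubgroup M) (g : G) : AddSubgroup (M ⧸ radSMul 𝒜 M) :=
  (ℳ g).map (radSMul 𝒜 M).mkQ.toAddMonoidHom

/-- Isomorphism in the category of graded left `R`-modules: a linear
equivalence matching the gradings. -/
def GrIsoM {M : Type v} {N : Type v} [AddCommGroup M] [Module R M]
    [AddCommGroup N] [Module R N]
    (ℳ : G → AddSubgroup M) (𝒩 : G → AddSubgroup N) : Prop :=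
  ∃ e : M ≃ₗ[R] N, ∀ (g : G) (x : M), x ∈ ℳ g ↔ e x ∈ 𝒩 g

/-! ### Auxiliary machinery -/

section AuxProj

open scoped Classical

variable {M : Type*} [AddCommGroup M] [Module R M]

/-- The decomposition equivalence coming from an internal direct sum. -/
noncomputable def gdec (ℳ : G → AddSubgroup M) (hi : DirectSum.IsInternal ℳ) :
    M ≃+ ⨁ g, ℳ g :=
  (AddEquiv.ofBijective (DirectSum.coeAddMonoidHom ℳ) hi).symm

/-- Projection onto the `g`-component. -/
noncomputable def gproj (ℳ : G → AddSubgroup M) (hi : DirectSum.IsInternal ℳ) (g : G) :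
    M →+ M :=
  ((ℳ g).subtype).comp ((DFinsupp.evalAddMonoidHom g).comp (gdec ℳ hi).toAddMonoidHom)

lemma gproj_apply (ℳ : G → AddSubgroup M) (hi : DirectSum.IsInternal ℳ) (g : G) (x : M) :
    gproj ℳ hi g x = (gdec ℳ hi x g : M) := rfl

lemma gproj_mem (ℳ : G → AddSubgroup M) (hi : DirectSum.IsInternal ℳ) (g : G) (x : M) :
    gproj ℳ hi g x ∈ ℳ g := (gdec ℳ hi x g).2

lemma gdec_symm_apply (ℳ : G → AddSubgroup M) (hi : DirectSum.IsInternal ℳ)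
    (c : ⨁ g, ℳ g) : (gdec ℳ hi).symm c = DirectSum.coeAddMonoidHom ℳ c := rfl

lemma gdec_of_mem (ℳ : G → AddSubgroup M) (hi : DirectSum.IsInternal ℳ)
    {g : G} {x : M} (hx : x ∈ ℳ g) :
    gdec ℳ hi x = DirectSum.of (fun g => ℳ g) g ⟨x, hx⟩ := by
  apply (gdec ℳ hi).symm.injective
  rw [AddEquiv.symm_apply_apply, gdec_symm_apply, DirectSum.coeAddMonoidHom_of]

/-- L2: projection of a homogeneous element. -/
lemma gproj_of_mem (ℳ : G → AddSubgroup M) (hi : DirectSum.IsInternal ℳ)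
    {g : G} {x : M} (hx : x ∈ ℳ g) (g' : G) :
    gproj ℳ hi g' x = if g' = g then x else 0 := by
  rw [gproj_apply, gdec_of_mem ℳ hi hx]
  by_cases h : g' = g
  · subst h; rw [DirectSum.of_eq_same, if_pos rfl]
  · rw [DirectSum.of_eq_of_ne _ _ _ h, if_neg h, ZeroMemClass.coe_zero]

lemma gproj_of_mem_same (ℳ : G → AddSubgroup M) (hi : DirectSum.IsInternal ℳ)
    {g : G} {x : M} (hx : x ∈ ℳ g) : gproj ℳ hi g x = x := by
  rw [gproj_of_mem ℳ hi hx, if_pos rfl]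

/-- L1: every element is a finite sum of its components. -/
lemma gproj_sum (ℳ : G → AddSubgroup M) (hi : DirectSum.IsInternal ℳ) (x : M) :
    ∃ s : Finset G, (∀ g ∉ s, gproj ℳ hi g x = 0) ∧ x = ∑ g ∈ s, gproj ℳ hi g x := by
  classical
  refine ⟨(gdec ℳ hi x).support, ?_, ?_⟩
  · intro g hg
    rw [gproj_apply]
    rw [DFinsupp.notMem_support_iff] at hg
    rw [hg, ZeroMemClass.coe_zero]
  · conv_lhs => rw [← (gdec ℳ hi).symm_apply_apply x]
    rw [gdec_symm_apply, DirectSum.coeAddMonoidHom_eq_dfinsuppSum]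
    rfl

lemma gmem_closure (ℳ : G → AddSubgroup M) (hi : DirectSum.IsInternal ℳ) (x : M) :
    x ∈ AddSubgroup.closure (⋃ g, (ℳ g : Set M)) := by
  obtain ⟨s, -, hx⟩ := gproj_sum ℳ hi x
  rw [hx]
  exact AddSubgroup.sum_mem _ fun g _ => AddSubgroup.subset_closure
    (Set.mem_iUnion.2 ⟨g, gproj_mem ℳ hi g x⟩)

end AuxProj

set_option linter.unusedSectionVars false

section AuxGraded

variable (𝒜 : G → AddSubgroup R)

lemma isGModule_self (h𝒜 : IsGRing 𝒜) : IsGModule 𝒜 𝒜 := by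
  refine ⟨fun g h a m ha hm => ?_, h𝒜.2.2⟩
  simpa [smul_eq_mul] using h𝒜.2.1 g h a m ha hm

variable {M : Type*} [AddCommGroup M] [Module R M] {ℳ : G → AddSubgroup M}

/-- L3: projection versus homogeneous scalar multiplication. -/
lemma gproj_smul (hM : IsGModule 𝒜 ℳ) {r : R} {h : G} (hr : r ∈ 𝒜 h)
    (x : M) (g : G) :
    gproj ℳ hM.2 g (r • x) = r • gproj ℳ hM.2 (h⁻¹ * g) x := by
  induction gmem_closure ℳ hM.2 x using AddSubgroup.closure_induction with
  | mem y hy =>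
      obtain ⟨_, ⟨k, rfl⟩, hyk⟩ := hy
      have h1 : r • y ∈ ℳ (h * k) := hM.1 h k r y hr hyk
      rw [gproj_of_mem ℳ hM.2 h1, gproj_of_mem ℳ hM.2 hyk]
      rcases eq_or_ne g (h * k) with rfl | hne
      · rw [if_pos rfl, if_pos (by group)]
      · rw [if_neg hne, if_neg (fun hc => hne (by rw [← hc]; group)), smul_zero]
  | zero => rw [smul_zero, map_zero, map_zero, smul_zero]
  | add y z hy hz ihy ihz => rw [smul_add, map_add, map_add, ihy, ihz, smul_add]
  | neg y hy ihy => rw [smul_neg, map_neg, map_neg, ihy, smul_neg]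

/-- L3R: projection versus right multiplication by a homogeneous element. -/
lemma gproj_mul_right (h𝒜 : IsGRing 𝒜) {r : R} {d : G} (hr : r ∈ 𝒜 d)
    (x : R) (g : G) :
    gproj 𝒜 h𝒜.2.2 g (x * r) = gproj 𝒜 h𝒜.2.2 (g * d⁻¹) x * r := by
  induction gmem_closure 𝒜 h𝒜.2.2 x using AddSubgroup.closure_induction with
  | mem y hy =>
      obtain ⟨_, ⟨k, rfl⟩, hyk⟩ := hy
      have h1 : y * r ∈ 𝒜 (k * d) := h𝒜.2.1 k d y r hyk hr
      rw [gproj_of_mem 𝒜 h𝒜.2.2 h1, gproj_of_mem 𝒜 h𝒜.2.2 hyk]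
      rcases eq_or_ne g (k * d) with rfl | hne
      · rw [if_pos rfl, if_pos (by group)]
      · rw [if_neg hne, if_neg (fun hc => hne (by rw [← hc]; group)), zero_mul]
  | zero => rw [zero_mul, map_zero, map_zero, zero_mul]
  | add y z hy hz ihy ihz => rw [add_mul, map_add, map_add, ihy, ihz, add_mul]
  | neg y hy ihy => rw [neg_mul, map_neg, map_neg, ihy, neg_mul]

/-- A submodule is component-closed if it contains all homogeneous components of
its elements. -/
def CompClosed (ℳ : G → AddSubgroup M) (hi : DirectSum.IsInternal ℳ)
    (N : Submodule R M) : Prop :=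
  ∀ x ∈ N, ∀ g, gproj ℳ hi g x ∈ N

lemma compClosed_span (h𝒜 : IsGRing 𝒜) (hM : IsGModule 𝒜 ℳ) (S : Set M)
    (hS : ∀ x ∈ S, ∀ g, gproj ℳ hM.2 g x ∈ Submodule.span R S) :
    CompClosed ℳ hM.2 (Submodule.span R S) := by
  intro x hx
  induction hx using Submodule.span_induction with
  | mem y hy => exact hS y hy
  | zero => intro g; rw [map_zero]; exact Submodule.zero_mem _
  | add y z hy hz ihy ihz =>
      intro g; rw [map_add]; exact Submodule.add_mem _ (ihy g) (ihz g)
  | smul c y hy ihy =>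
      intro g
      induction gmem_closure 𝒜 h𝒜.2.2 c using AddSubgroup.closure_induction with
      | mem r hr =>
          obtain ⟨_, ⟨k, rfl⟩, hrk⟩ := hr
          rw [gproj_smul 𝒜 hM hrk]
          exact Submodule.smul_mem _ _ (ihy _)
      | zero => rw [zero_smul, map_zero]; exact Submodule.zero_mem _
      | add a b ha hb iha ihb => rw [add_smul, map_add]; exact Submodule.add_mem _ iha ihb
      | neg a ha iha => rw [neg_smul, map_neg]; exact Submodule.neg_mem _ iha

lemma compClosed_to_graded (hM : IsGModule 𝒜 ℳ) {N : Submodule R M}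
    (hN : CompClosed ℳ hM.2 N) : IsGradedSubmodule ℳ N := by
  apply le_antisymm
  · intro x hx
    obtain ⟨s, -, hsum⟩ := gproj_sum ℳ hM.2 x
    rw [hsum]
    exact Submodule.sum_mem _ fun g _ => Submodule.subset_span
      ⟨hN x hx g, Set.mem_iUnion.2 ⟨g, gproj_mem ℳ hM.2 g x⟩⟩
  · rw [Submodule.span_le]; exact fun y hy => hy.1

lemma graded_to_compClosed (h𝒜 : IsGRing 𝒜) (hM : IsGModule 𝒜 ℳ) {N : Submodule R M}
    (hN : IsGradedSubmodule ℳ N) : CompClosed ℳ hM.2 N := by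
  intro x hx g
  rw [hN] at hx ⊢
  refine compClosed_span 𝒜 h𝒜 hM _ (fun y hy g' => ?_) x hx g
  obtain ⟨hyN, hyh⟩ := hy
  obtain ⟨_, ⟨k, rfl⟩, hyk⟩ := hyh
  rw [gproj_of_mem ℳ hM.2 hyk]
  split_ifs with h
  · exact Submodule.subset_span ⟨hyN, Set.mem_iUnion.2 ⟨k, hyk⟩⟩
  · exact Submodule.zero_mem _

lemma gli_iff_graded {I : Submodule R R} :
    IsGradedLeftIdeal 𝒜 I ↔ IsGradedSubmodule 𝒜 I := Iff.rfl

lemma compClosed_to_gli (h𝒜 : IsGRing 𝒜) {I : Submodule R R}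
    (hI : CompClosed 𝒜 h𝒜.2.2 I) : IsGradedLeftIdeal 𝒜 I :=
  compClosed_to_graded 𝒜 (isGModule_self 𝒜 h𝒜) hI

lemma gli_to_compClosed (h𝒜 : IsGRing 𝒜) {I : Submodule R R}
    (hI : IsGradedLeftIdeal 𝒜 I) : CompClosed 𝒜 h𝒜.2.2 I :=
  graded_to_compClosed 𝒜 h𝒜 (isGModule_self 𝒜 h𝒜) hI

end AuxGraded

section AuxJacobson

variable (𝒜 : G → AddSubgroup R)

lemma one_mem_eq_top {N : Submodule R R} (h1 : (1:R) ∈ N) : N = ⊤ := by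
  rw [Submodule.eq_top_iff']; intro x; simpa using N.smul_mem x h1

lemma grJacobson_compClosed (h𝒜 : IsGRing 𝒜) :
    CompClosed 𝒜 h𝒜.2.2 (grJacobson 𝒜) := by
  intro x hx g
  rw [grJacobson, Submodule.mem_sInf] at hx ⊢
  intro Mx hMx
  exact gli_to_compClosed 𝒜 h𝒜 hMx.1 x (hx Mx hMx) g

lemma exists_max_graded (h𝒜 : IsGRing 𝒜) {L : Submodule R R}
    (hL : CompClosed 𝒜 h𝒜.2.2 L) (h1 : (1:R) ∉ L) :
    ∃ Mx : Submodule R R, IsMaxGradedLeftIdeal 𝒜 Mx ∧ L ≤ Mx := by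
  have hub : ∀ c ⊆ {T : Submodule R R | CompClosed 𝒜 h𝒜.2.2 T ∧ (1:R) ∉ T ∧ L ≤ T},
      IsChain (· ≤ ·) c → ∀ y ∈ c, ∃ ub ∈ {T : Submodule R R |
        CompClosed 𝒜 h𝒜.2.2 T ∧ (1:R) ∉ T ∧ L ≤ T}, ∀ z ∈ c, z ≤ ub := by
    intro c hcs hchain y hy
    refine ⟨sSup c, ⟨?_, ?_, ?_⟩, fun z hz => le_sSup hz⟩
    · intro x hx g
      obtain ⟨T, hTc, hxT⟩ := (Submodule.mem_sSup_of_directed ⟨y, hy⟩ hchain.directedOn).1 hx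
      exact le_sSup hTc ((hcs hTc).1 x hxT g)
    · intro h1s
      obtain ⟨T, hTc, h1T⟩ := (Submodule.mem_sSup_of_directed ⟨y, hy⟩ hchain.directedOn).1 h1s
      exact (hcs hTc).2.1 h1T
    · exact (hcs hy).2.2.trans (le_sSup hy)
  obtain ⟨Mx, hLM, hmax⟩ := zorn_le_nonempty₀
    {T : Submodule R R | CompClosed 𝒜 h𝒜.2.2 T ∧ (1:R) ∉ T ∧ L ≤ T} hub L ⟨hL, h1, le_rfl⟩
  obtain ⟨hMcc, hM1, hLM'⟩ := hmax.prop
  refine ⟨Mx, ⟨compClosed_to_gli 𝒜 h𝒜 hMcc,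
    fun ht => hM1 (ht ▸ Submodule.mem_top), ?_⟩, hLM'⟩
  intro T hT hMT
  by_cases h1T : (1:R) ∈ T
  · exact one_mem_eq_top h1T
  · exact absurd (hmax.2 ⟨gli_to_compClosed 𝒜 h𝒜 hT, h1T, hLM'.trans hMT.le⟩ hMT.le)
      hMT.not_ge

/-- Right multiplication as a left-linear map. -/
def mulRightL (r : R) : R →ₗ[R] R where
  toFun x := x * r
  map_add' x y := add_mul x y r
  map_smul' c x := by simp [smul_eq_mul, mul_assoc]

lemma colon_isMax (h𝒜 : IsGRing 𝒜) {Mx : Submodule R R} (hM : IsMaxGradedLeftIdeal 𝒜 Mx)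
    {r : R} {d : G} (hr : r ∈ 𝒜 d) (hrM : r ∉ Mx) :
    IsMaxGradedLeftIdeal 𝒜 (Submodule.comap (mulRightL r) Mx) := by
  have hMcc := gli_to_compClosed 𝒜 h𝒜 hM.1
  have hcc : CompClosed 𝒜 h𝒜.2.2 (Submodule.comap (mulRightL r) Mx) := by
    intro x hx g
    have h2 := gproj_mul_right 𝒜 h𝒜 hr x (g * d)
    rw [show g * d * d⁻¹ = g by group] at h2
    show gproj 𝒜 h𝒜.2.2 g x * r ∈ Mx
    rw [← h2]
    exact hMcc _ hx (g * d)
  refine ⟨compClosed_to_gli 𝒜 h𝒜 hcc, ?_, ?_⟩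
  · intro htop
    have h1 : (1:R) ∈ Submodule.comap (mulRightL r) Mx := htop ▸ Submodule.mem_top
    exact hrM (by simpa [mulRightL] using h1)
  · intro T hT hCT
    set T' := Mx ⊔ Submodule.map (mulRightL r) T with hT'def
    have hT'cc : CompClosed 𝒜 h𝒜.2.2 T' := by
      intro x hx g
      rcases Submodule.mem_sup.1 hx with ⟨m, hm, y, hy, rfl⟩
      obtain ⟨t, ht, rfl⟩ := hy
      rw [map_add]
      refine Submodule.add_mem _ (Submodule.mem_sup_left (hMcc m hm g)) ?_
      have h3 : gproj 𝒜 h𝒜.2.2 g (mulRightL r t) = mulRightL r (gproj 𝒜 h𝒜.2.2 (g * d⁻¹) t) :=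
        gproj_mul_right 𝒜 h𝒜 hr t g
      rw [h3]
      exact Submodule.mem_sup_right
        (Submodule.mem_map_of_mem (gli_to_compClosed 𝒜 h𝒜 hT t ht (g * d⁻¹)))
    obtain ⟨t0, ht0T, ht0n⟩ := SetLike.exists_of_lt hCT
    have hlt : Mx < T' := by
      refine lt_of_le_of_ne le_sup_left fun heq => ?_
      have h4 : mulRightL r t0 ∈ T' := Submodule.mem_sup_right (Submodule.mem_map_of_mem ht0T)
      rw [← heq] at h4
      exact ht0n (Submodule.mem_comap.mpr h4)
    have hT'top : T' = ⊤ := hM.2.2 T' (compClosed_to_gli 𝒜 h𝒜 hT'cc) hlt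
    rw [Submodule.eq_top_iff']
    intro x
    have hxr : mulRightL r x ∈ T' := hT'top ▸ Submodule.mem_top
    rcases Submodule.mem_sup.1 hxr with ⟨m, hm, y, hy, hxy⟩
    obtain ⟨t, ht, rfl⟩ := hy
    have h5 : x - t ∈ Submodule.comap (mulRightL r) Mx := by
      refine Submodule.mem_comap.mpr ?_
      have : mulRightL r (x - t) = m := by
        rw [map_sub, ← hxy]; abel
      rw [this]; exact hm
    have h6 : x - t ∈ T := hCT.le h5
    simpa using T.add_mem h6 ht

lemma grJacobson_mul_right (h𝒜 : IsGRing 𝒜) {j : R} (hj : j ∈ grJacobson 𝒜) (r : R) :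
    j * r ∈ grJacobson 𝒜 := by
  have homog : ∀ (d : G) (r' : R), r' ∈ 𝒜 d → j * r' ∈ grJacobson 𝒜 := by
    intro d r' hr'
    rw [grJacobson, Submodule.mem_sInf]
    intro Mx hMx
    by_cases hrM : r' ∈ Mx
    · simpa [smul_eq_mul] using Mx.smul_mem j hrM
    · have hmax := colon_isMax 𝒜 h𝒜 hMx hr' hrM
      have hJle : grJacobson 𝒜 ≤ Submodule.comap (mulRightL r') Mx := sInf_le hmax
      exact hJle hj
  obtain ⟨s, -, hsum⟩ := gproj_sum 𝒜 h𝒜.2.2 r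
  rw [show j * r = ∑ g ∈ s, j * gproj 𝒜 h𝒜.2.2 g r by rw [← Finset.mul_sum, ← hsum]]
  exact Submodule.sum_mem _ fun g _ => homog g _ (gproj_mem _ _ _ _)

end AuxJacobson

section AuxNilpotent

variable (𝒜 : G → AddSubgroup R)

/-- Powers of the graded Jacobson radical. -/
def Jpow : ℕ → Submodule R R
  | 0 => ⊤
  | n + 1 => Submodule.span R {x : R | ∃ a ∈ Jpow n, ∃ b ∈ grJacobson 𝒜, x = a * b}

lemma Jpow_mul_right (h𝒜 : IsGRing 𝒜) (n : ℕ) {x : R} (hx : x ∈ Jpow 𝒜 n) (r : R) :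
    x * r ∈ Jpow 𝒜 n := by
  cases n with
  | zero => exact Submodule.mem_top
  | succ n =>
    induction hx using Submodule.span_induction with
    | mem y hy =>
        obtain ⟨a, ha, b, hb, rfl⟩ := hy
        rw [mul_assoc]
        exact Submodule.subset_span ⟨a, ha, b * r, grJacobson_mul_right 𝒜 h𝒜 hb r, rfl⟩
    | zero => rw [zero_mul]; exact Submodule.zero_mem _
    | add y z _ _ ihy ihz => rw [add_mul]; exact Submodule.add_mem _ ihy ihz
    | smul c y _ ihy =>
        rw [smul_eq_mul, mul_assoc, ← smul_eq_mul]
        exact Submodule.smul_mem _ _ ihy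

lemma Jpow_compClosed (h𝒜 : IsGRing 𝒜) : ∀ n, CompClosed 𝒜 h𝒜.2.2 (Jpow 𝒜 n) := by
  intro n
  induction n with
  | zero => exact fun x _ g => Submodule.mem_top
  | succ n ih =>
      refine compClosed_span 𝒜 h𝒜 (isGModule_self 𝒜 h𝒜) _ ?_
      rintro y ⟨a, ha, b, hb, rfl⟩ g
      obtain ⟨s, -, hbsum⟩ := gproj_sum 𝒜 h𝒜.2.2 b
      rw [show a * b = ∑ d ∈ s, a * gproj 𝒜 h𝒜.2.2 d b from by
        rw [← Finset.mul_sum, ← hbsum], map_sum]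
      refine Submodule.sum_mem _ fun d _ => ?_
      rw [gproj_mul_right 𝒜 h𝒜 (gproj_mem 𝒜 h𝒜.2.2 d b) a g]
      exact Submodule.subset_span ⟨_, ih _ ha _, _,
        grJacobson_compClosed 𝒜 h𝒜 b hb d, rfl⟩

lemma Jpow_gli (h𝒜 : IsGRing 𝒜) (n : ℕ) : IsGradedLeftIdeal 𝒜 (Jpow 𝒜 n) :=
  compClosed_to_gli 𝒜 h𝒜 (Jpow_compClosed 𝒜 h𝒜 n)

lemma Jpow_antitone : Antitone (Jpow 𝒜) := by
  refine antitone_nat_of_succ_le ?_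
  intro n
  induction n with
  | zero => exact le_top
  | succ n ih =>
      refine Submodule.span_le.2 ?_
      rintro x ⟨a, ha, b, hb, rfl⟩
      exact Submodule.subset_span ⟨a, ih ha, b, hb, rfl⟩

lemma Jpow_one_le : Jpow 𝒜 1 ≤ grJacobson 𝒜 := by
  refine Submodule.span_le.2 ?_
  rintro x ⟨a, -, b, hb, rfl⟩
  exact (grJacobson 𝒜).smul_mem a hb

lemma Jpow_add_le (m n : ℕ) :
    Jpow 𝒜 (m + n) ≤
      Submodule.span R {x : R | ∃ a ∈ Jpow 𝒜 m, ∃ b ∈ Jpow 𝒜 n, x = a * b} := by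
  induction n with
  | zero =>
      intro x hx
      exact Submodule.subset_span ⟨x, hx, 1, Submodule.mem_top, (mul_one x).symm⟩
  | succ n ih =>
      refine Submodule.span_le.2 ?_
      rintro x ⟨u, hu, v, hv, rfl⟩
      have hu' := ih hu
      clear hu
      induction hu' using Submodule.span_induction with
      | mem y hy =>
          obtain ⟨a, ha, b, hb, rfl⟩ := hy
          rw [mul_assoc]
          exact Submodule.subset_span
            ⟨a, ha, b * v, Submodule.subset_span ⟨b, hb, v, hv, rfl⟩, rfl⟩
      | zero => rw [zero_mul]; exact Submodule.zero_mem _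
      | add y z _ _ ihy ihz => rw [add_mul]; exact Submodule.add_mem _ ihy ihz
      | smul c y _ ihy =>
          rw [smul_eq_mul, mul_assoc, ← smul_eq_mul]
          exact Submodule.smul_mem _ _ ihy

lemma exists_minimal_graded (hart : GrLeftArtinian 𝒜) (S : Set (Submodule R R))
    (hgr : ∀ A ∈ S, IsGradedLeftIdeal 𝒜 A) (hne : S.Nonempty) :
    ∃ A ∈ S, ∀ B ∈ S, B ≤ A → B = A := by
  by_contra hcon
  push_neg at hcon
  obtain ⟨A0, hA0⟩ := hne
  choose! F hF using hcon
  let f : ℕ → Submodule R R := fun n => F^[n] A0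
  have hfS : ∀ n, f n ∈ S := by
    intro n
    induction n with
    | zero => exact hA0
    | succ n ih =>
        show F^[n+1] A0 ∈ S
        rw [Function.iterate_succ_apply']
        exact (hF _ ih).1
  have hstep : ∀ n, f (n+1) ≤ f n ∧ f (n+1) ≠ f n := by
    intro n
    have h1 : f (n+1) = F (f n) := Function.iterate_succ_apply' F n A0
    rw [h1]
    exact ⟨(hF _ (hfS n)).2.1, (hF _ (hfS n)).2.2⟩
  obtain ⟨n, hn⟩ := hart f (fun n => hgr _ (hfS n))
    (antitone_nat_of_succ_le fun n => (hstep n).1)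
  exact (hstep n).2 (hn (n+1) (Nat.le_succ n))

lemma Jpow_eq_bot (h𝒜 : IsGRing 𝒜) (hart : GrLeftArtinian 𝒜) :
    ∃ n : ℕ, 1 ≤ n ∧ Jpow 𝒜 n = ⊥ := by
  obtain ⟨N, hN⟩ := hart (Jpow 𝒜) (fun n => Jpow_gli 𝒜 h𝒜 n) (Jpow_antitone 𝒜)
  refine ⟨N + 1, Nat.le_add_left 1 N, ?_⟩
  set I := Jpow 𝒜 (N+1) with hI
  have hstab : ∀ m, N ≤ m → Jpow 𝒜 m = I := fun m hm => by
    rw [hN m hm, ← hN (N+1) (Nat.le_succ N)]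
  by_contra hIbot
  set 𝒮 : Set (Submodule R R) := {A | IsGradedLeftIdeal 𝒜 A ∧
    ∃ a ∈ A, (∃ g, a ∈ 𝒜 g) ∧ ∃ j ∈ I, j * a ≠ 0} with h𝒮
  have hRS : (⊤ : Submodule R R) ∈ 𝒮 := by
    obtain ⟨j, hjI, hj0⟩ := Submodule.exists_mem_ne_zero_of_ne_bot hIbot
    exact ⟨compClosed_to_gli 𝒜 h𝒜 (fun x _ g => Submodule.mem_top), 1, Submodule.mem_top,
      ⟨1, h𝒜.1⟩, j, hjI, by rwa [mul_one]⟩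
  obtain ⟨A, hAS, hAmin⟩ := exists_minimal_graded 𝒜 hart 𝒮 (fun A hA => hA.1) ⟨⊤, hRS⟩
  obtain ⟨hAgr, a, haA, ⟨d, had⟩, j0, hj0I, hj0a⟩ := hAS
  set B : Submodule R R := Submodule.span R {x | ∃ j ∈ I, x = j * a} with hBdef
  have hBA : B ≤ A := Submodule.span_le.2 (by
    rintro x ⟨j, hj, rfl⟩
    exact A.smul_mem j haA)
  have hBcc : CompClosed 𝒜 h𝒜.2.2 B := by
    refine compClosed_span 𝒜 h𝒜 (isGModule_self 𝒜 h𝒜) _ ?_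
    rintro x ⟨j, hj, rfl⟩ g
    rw [gproj_mul_right 𝒜 h𝒜 had j g]
    exact Submodule.subset_span ⟨_, Jpow_compClosed 𝒜 h𝒜 (N+1) j hj (g * d⁻¹), rfl⟩
  have hkey : ∃ b ∈ B, (∃ g, b ∈ 𝒜 g) ∧ ∃ j ∈ I, j * b ≠ 0 := by
    by_contra hcon
    push_neg at hcon
    have hall : ∀ b ∈ B, ∀ j ∈ I, j * b = 0 := by
      intro b hb j hj
      obtain ⟨s, -, hbsum⟩ := gproj_sum 𝒜 h𝒜.2.2 b
      rw [show j * b = ∑ g ∈ s, j * gproj 𝒜 h𝒜.2.2 g b from by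
        rw [← Finset.mul_sum, ← hbsum]]
      exact Finset.sum_eq_zero fun g _ =>
        hcon _ (hBcc b hb g) ⟨g, gproj_mem _ _ _ _⟩ j hj
    have hIsq : I ≤ Submodule.span R {x : R | ∃ u ∈ I, ∃ v ∈ I, x = u * v} := by
      have h2 := Jpow_add_le 𝒜 (N+1) (N+1)
      rwa [hstab (N+1+(N+1)) (by omega)] at h2
    have hmem := hIsq hj0I
    have hz : ∀ z ∈ Submodule.span R {x : R | ∃ u ∈ I, ∃ v ∈ I, x = u * v},
        z * a = 0 := by
      intro z hz
      induction hz using Submodule.span_induction with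
      | mem y hy =>
          obtain ⟨u, hu, v, hv, rfl⟩ := hy
          rw [mul_assoc]
          exact hall (v * a) (Submodule.subset_span ⟨v, hv, rfl⟩) u hu
      | zero => rw [zero_mul]
      | add y z _ _ ihy ihz => rw [add_mul, ihy, ihz, add_zero]
      | smul c y _ ihy => rw [smul_eq_mul, mul_assoc, ihy, mul_zero]
    exact hj0a (hz j0 hmem)
  have hBS : B ∈ 𝒮 := ⟨compClosed_to_gli 𝒜 h𝒜 hBcc, hkey⟩
  have hBA' : B = A := hAmin B hBS hBA
  have haB : a ∈ B := hBA' ▸ haA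
  obtain ⟨n, c, v, hva⟩ := Submodule.mem_span_set'.1 haB
  have hv : ∀ i, ∃ j ∈ I, (v i : R) = j * a := fun i => (v i).2
  choose jf hjf hjfa using hv
  have hwa : (∑ i, c i * jf i) * a = a := by
    conv_rhs => rw [← hva]
    rw [Finset.sum_mul]
    refine Finset.sum_congr rfl fun i _ => ?_
    rw [mul_assoc, ← hjfa i, smul_eq_mul]
  set w := ∑ i, c i * jf i with hw
  have hwI : w ∈ I := Submodule.sum_mem _ fun i _ => Submodule.smul_mem _ _ (hjf i)
  have h7 : gproj 𝒜 h𝒜.2.2 d a = a := gproj_of_mem_same 𝒜 h𝒜.2.2 had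
  have h8 := gproj_mul_right 𝒜 h𝒜 had w d
  rw [hwa, h7, show d * d⁻¹ = (1:G) from by group] at h8
  set e := gproj 𝒜 h𝒜.2.2 1 w with he
  have heJ : e ∈ grJacobson 𝒜 := by
    have heI : e ∈ I := Jpow_compClosed 𝒜 h𝒜 (N+1) w hwI 1
    exact Jpow_one_le 𝒜 (Jpow_antitone 𝒜 (by omega : 1 ≤ N+1) heI)
  have he1 : e ∈ 𝒜 1 := gproj_mem _ _ _ _
  have hL : Submodule.span R {(1:R) - e} = ⊤ := by
    by_contra hLne
    have hLcc : CompClosed 𝒜 h𝒜.2.2 (Submodule.span R {(1:R) - e}) := by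
      refine compClosed_span 𝒜 h𝒜 (isGModule_self 𝒜 h𝒜) _ ?_
      intro x hx g
      rw [Set.mem_singleton_iff] at hx; subst hx
      have h1e : (1:R) - e ∈ 𝒜 1 := AddSubgroup.sub_mem _ h𝒜.1 he1
      rw [gproj_of_mem 𝒜 h𝒜.2.2 h1e]
      split_ifs
      · exact Submodule.subset_span rfl
      · exact Submodule.zero_mem _
    have h1L : (1:R) ∉ Submodule.span R {(1:R) - e} := fun h1 => hLne (one_mem_eq_top h1)
    obtain ⟨Mx, hMx, hLMx⟩ := exists_max_graded 𝒜 h𝒜 hLcc h1L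
    have hJM : grJacobson 𝒜 ≤ Mx := sInf_le hMx
    have h1M : (1:R) ∈ Mx := by
      have h9 := Mx.add_mem (hLMx (Submodule.mem_span_singleton_self _)) (hJM heJ)
      simpa using h9
    exact hMx.2.1 (one_mem_eq_top h1M)
  obtain ⟨cc, hcc1⟩ := Submodule.mem_span_singleton.1 (hL ▸ Submodule.mem_top : (1:R) ∈ _)
  have ha0 : a = 0 := by
    calc a = 1 * a := (one_mul a).symm
    _ = (cc • ((1:R) - e)) * a := by rw [hcc1]
    _ = cc * (((1:R)-e) * a) := by rw [smul_eq_mul, mul_assoc]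
    _ = cc * (a - e * a) := by rw [sub_mul, one_mul]
    _ = cc * 0 := by rw [sub_eq_zero.mpr h8]
    _ = 0 := mul_zero cc
  exact hj0a (by rw [ha0, mul_zero])

end AuxNilpotent

section AuxModule

variable (𝒜 : G → AddSubgroup R) {M : Type*} [AddCommGroup M] [Module R M]
variable {ℳ : G → AddSubgroup M}

lemma radSMul_compClosed (h𝒜 : IsGRing 𝒜) (hM : IsGModule 𝒜 ℳ) :
    CompClosed ℳ hM.2 (radSMul 𝒜 M) := by
  refine compClosed_span 𝒜 h𝒜 hM _ ?_
  rintro y ⟨r, hr, x, rfl⟩ g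
  obtain ⟨s, -, hrsum⟩ := gproj_sum 𝒜 h𝒜.2.2 r
  rw [show r • x = ∑ k ∈ s, gproj 𝒜 h𝒜.2.2 k r • x from by
    rw [← Finset.sum_smul, ← hrsum], map_sum]
  refine Submodule.sum_mem _ fun k _ => ?_
  rw [gproj_smul 𝒜 hM (gproj_mem 𝒜 h𝒜.2.2 k r) x g]
  exact Submodule.subset_span ⟨_, grJacobson_compClosed 𝒜 h𝒜 r hr k, _, rfl⟩

lemma quotGrading_isGModule (h𝒜 : IsGRing 𝒜) (hM : IsGModule 𝒜 ℳ) :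
    IsGModule 𝒜 (quotGrading 𝒜 ℳ) := by
  classical
  constructor
  · rintro g k a m ha hm
    obtain ⟨y, hy, rfl⟩ := hm
    exact ⟨a • y, hM.1 g k a y ha hy, map_smul (radSMul 𝒜 M).mkQ a y⟩
  · constructor
    · rw [injective_iff_map_eq_zero]
      intro c hc
      have hlift : ∀ g, ∃ y : M, y ∈ ℳ g ∧
          (radSMul 𝒜 M).mkQ y = (c g : M ⧸ radSMul 𝒜 M) := by
        intro g
        obtain ⟨y, hy, hy2⟩ := (c g).2
        exact ⟨y, hy, hy2⟩
      choose ℓ hℓmem hℓ using hlift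
      have hsum0 : ∑ g ∈ c.support, (c g : M ⧸ radSMul 𝒜 M) = 0 := by
        rw [DirectSum.coeAddMonoidHom_eq_dfinsuppSum] at hc
        exact hc
      set x : M := ∑ g ∈ c.support, ℓ g with hxdef
      have hx : (radSMul 𝒜 M).mkQ x = 0 := by
        rw [hxdef, map_sum,
          show ∑ g ∈ c.support, (radSMul 𝒜 M).mkQ (ℓ g)
            = ∑ g ∈ c.support, (c g : M ⧸ radSMul 𝒜 M) from
          Finset.sum_congr rfl fun g _ => hℓ g, hsum0]
      have hxmem : x ∈ radSMul 𝒜 M := by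
        rwa [Submodule.mkQ_apply, Submodule.Quotient.mk_eq_zero] at hx
      have hcomp : ∀ g ∈ c.support, ℓ g ∈ radSMul 𝒜 M := by
        intro g hg
        have h1 : gproj ℳ hM.2 g x ∈ radSMul 𝒜 M :=
          radSMul_compClosed 𝒜 h𝒜 hM x hxmem g
        have h2 : gproj ℳ hM.2 g x = ℓ g := by
          rw [hxdef, map_sum,
            show (∑ g' ∈ c.support, gproj ℳ hM.2 g (ℓ g'))
              = ∑ g' ∈ c.support, if g = g' then ℓ g' else 0 from
            Finset.sum_congr rfl fun g' _ => gproj_of_mem ℳ hM.2 (hℓmem g') g,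
            Finset.sum_ite_eq c.support g _, if_pos hg]
        rwa [h2] at h1
      refine DFinsupp.ext fun g => ?_
      by_cases hg : g ∈ c.support
      · refine Subtype.ext ?_
        show (c g : M ⧸ radSMul 𝒜 M) = 0
        rw [← hℓ g, Submodule.mkQ_apply, Submodule.Quotient.mk_eq_zero]
        exact hcomp g hg
      · exact DFinsupp.notMem_support_iff.1 hg
    · intro yq
      obtain ⟨y, rfl⟩ := (radSMul 𝒜 M).mkQ_surjective yq
      obtain ⟨s, -, hysum⟩ := gproj_sum ℳ hM.2 y
      refine ⟨∑ g ∈ s, DirectSum.of (fun g => quotGrading 𝒜 ℳ g) g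
        ⟨(radSMul 𝒜 M).mkQ (gproj ℳ hM.2 g y), _, gproj_mem ℳ hM.2 g y, rfl⟩, ?_⟩
      rw [map_sum]
      simp only [DirectSum.coeAddMonoidHom_of]
      rw [← map_sum, ← hysum]

end AuxModule

section AuxNpow

variable (𝒜 : G → AddSubgroup R)

/-- The submodule `(J^gr)^k · M`. -/
def NpowM (M : Type*) [AddCommGroup M] [Module R M] (k : ℕ) : Submodule R M :=
  Submodule.span R {y : M | ∃ j ∈ Jpow 𝒜 k, ∃ x : M, y = j • x}

lemma Jpow_one_eq : Jpow 𝒜 1 = grJacobson 𝒜 :=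
  le_antisymm (Jpow_one_le 𝒜) fun j hj =>
    Submodule.subset_span ⟨1, Submodule.mem_top, j, hj, (one_mul j).symm⟩

lemma NpowM_one (M : Type*) [AddCommGroup M] [Module R M] :
    NpowM 𝒜 M 1 = radSMul 𝒜 M := by
  unfold NpowM radSMul
  rw [Jpow_one_eq]

lemma NpowM_bot (M : Type*) [AddCommGroup M] [Module R M] {n : ℕ}
    (hn : Jpow 𝒜 n = ⊥) : NpowM 𝒜 M n = ⊥ := by
  rw [eq_bot_iff]
  refine Submodule.span_le.2 ?_
  rintro y ⟨j, hj, x, rfl⟩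
  rw [hn] at hj
  rw [(Submodule.mem_bot R).1 hj, zero_smul]
  exact Submodule.zero_mem _

lemma smul_radSMul_mem (h𝒜 : IsGRing 𝒜) {M : Type*} [AddCommGroup M] [Module R M]
    (k : ℕ) {z : M} (hz : z ∈ radSMul 𝒜 M) :
    ∀ j ∈ Jpow 𝒜 k, j • z ∈ NpowM 𝒜 M (k+1) := by
  induction hz using Submodule.span_induction with
  | mem y hy =>
      obtain ⟨r, hr, x, rfl⟩ := hy
      intro j hj
      rw [smul_smul]
      exact Submodule.subset_span
        ⟨j * r, Submodule.subset_span ⟨j, hj, r, hr, rfl⟩, x, rfl⟩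
  | zero => intro j hj; rw [smul_zero]; exact Submodule.zero_mem _
  | add y z _ _ ihy ihz =>
      intro j hj
      rw [smul_add]
      exact Submodule.add_mem _ (ihy j hj) (ihz j hj)
  | smul c y _ ihy =>
      intro j hj
      rw [smul_smul]
      exact ihy (j * c) (Jpow_mul_right 𝒜 h𝒜 k hj c)

end AuxNpow

/-- for a graded left Artinian `R` and graded projective left
modules `P, Q`, one has `P ≅ Q` in `R`-gr iff
`P/J^gr(R)P ≅ Q/J^gr(R)Q` as graded modules (equivalently, as graded
`R/J^gr(R)`-modules). -/
theorem graded_projectives_iso_iff_quotients_iso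
    (𝒜 : G → AddSubgroup R) (h𝒜 : IsGRing 𝒜) (hart : GrLeftArtinian 𝒜)
    {P : Type v} [AddCommGroup P] [Module R P] (Pgr : G → AddSubgroup P)
    (hP : IsGModule 𝒜 Pgr) (hPproj : GrProjective 𝒜 Pgr)
    {Q : Type v} [AddCommGroup Q] [Module R Q] (Qgr : G → AddSubgroup Q)
    (hQ : IsGModule 𝒜 Qgr) (hQproj : GrProjective 𝒜 Qgr) :
    GrIsoM (R := R) Pgr Qgr ↔
      GrIsoM (R := R) (quotGrading 𝒜 Pgr) (quotGrading 𝒜 Qgr) := by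
  classical
  constructor
  · -- easy direction: an iso induces an iso on quotients
    rintro ⟨e, he⟩
    have hmap : (radSMul 𝒜 P).map (e : P →ₗ[R] Q) = radSMul 𝒜 Q := by
      unfold radSMul
      rw [Submodule.map_span]
      congr 1
      ext y
      constructor
      · rintro ⟨z, ⟨r, hr, x, rfl⟩, rfl⟩
        exact ⟨r, hr, e x, by rw [map_smul]; simp⟩
      · rintro ⟨r, hr, x, rfl⟩
        exact ⟨r • e.symm x, ⟨r, hr, _, rfl⟩,
          by rw [map_smul]; simp⟩
    set E := Submodule.Quotient.equiv (radSMul 𝒜 P) (radSMul 𝒜 Q) e hmap with hEdef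
    have hEmk : ∀ x : P, E ((radSMul 𝒜 P).mkQ x) = (radSMul 𝒜 Q).mkQ (e x) := by
      intro x
      simp [hEdef, Submodule.Quotient.equiv, Submodule.mkQ_apply, Submodule.mapQ_apply]
    refine ⟨E, ?_⟩
    intro g xq
    constructor
    · rintro ⟨x, hx, rfl⟩
      exact ⟨e x, (he g x).1 hx, (hEmk x).symm⟩
    · rintro ⟨y, hy, hyq⟩
      have h1 : E ((radSMul 𝒜 P).mkQ (e.symm y)) = E xq := by
        rw [hEmk, e.apply_symm_apply]
        exact hyq
      have h2 : (radSMul 𝒜 P).mkQ (e.symm y) = xq := E.injective h1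
      exact ⟨e.symm y, (he g (e.symm y)).2 (by rw [e.apply_symm_apply]; exact hy), h2⟩
  · -- hard direction
    rintro ⟨ebar, hebar⟩
    obtain ⟨n, hn1, hnbot⟩ := Jpow_eq_bot 𝒜 h𝒜 hart
    have hQmod : IsGModule 𝒜 (quotGrading 𝒜 Qgr) := quotGrading_isGModule 𝒜 h𝒜 hQ
    obtain ⟨h, hdeg, hcomp⟩ := hPproj Q (Q ⧸ radSMul 𝒜 Q) Qgr (quotGrading 𝒜 Qgr)
      hQ hQmod (radSMul 𝒜 Q).mkQ (Submodule.mkQ_surjective _)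
      (fun g x hx => ⟨x, hx, rfl⟩)
      (ebar.toLinearMap.comp (radSMul 𝒜 P).mkQ)
      (fun g x hx => (hebar g ((radSMul 𝒜 P).mkQ x)).1 ⟨x, hx, rfl⟩)
    have hcomp' : ∀ p : P, (radSMul 𝒜 Q).mkQ (h p) = ebar ((radSMul 𝒜 P).mkQ p) :=
      fun p => LinearMap.congr_fun hcomp p
    -- h hits everything modulo J•Q
    have hsurj1 : ∀ q : Q, ∃ p : P, q - h p ∈ radSMul 𝒜 Q := by
      intro q
      obtain ⟨xq, hxq⟩ := ebar.surjective ((radSMul 𝒜 Q).mkQ q)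
      obtain ⟨p, rfl⟩ := (radSMul 𝒜 P).mkQ_surjective xq
      refine ⟨p, ?_⟩
      have h1 : (radSMul 𝒜 Q).mkQ q = (radSMul 𝒜 Q).mkQ (h p) := by
        rw [hcomp' p, hxq]
      rw [Submodule.mkQ_apply, Submodule.mkQ_apply] at h1
      exact (Submodule.Quotient.eq _).1 h1
    have hbase : LinearMap.range h ⊔ radSMul 𝒜 Q = ⊤ := by
      rw [Submodule.eq_top_iff']
      intro q
      obtain ⟨p, hp⟩ := hsurj1 q
      rw [show q = h p + (q - h p) from by abel]
      exact Submodule.add_mem _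
        (Submodule.mem_sup_left (LinearMap.mem_range_self h p))
        (Submodule.mem_sup_right hp)
    have hstep : ∀ k : ℕ, NpowM 𝒜 Q k ≤ LinearMap.range h ⊔ NpowM 𝒜 Q (k+1) := by
      intro k
      refine Submodule.span_le.2 ?_
      rintro y ⟨j, hj, x, rfl⟩
      have hx : x ∈ LinearMap.range h ⊔ radSMul 𝒜 Q := hbase ▸ Submodule.mem_top
      rcases Submodule.mem_sup.1 hx with ⟨u, hu, m, hm, rfl⟩
      obtain ⟨p, rfl⟩ := hu
      rw [smul_add]
      refine Submodule.add_mem _ ?_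
        (Submodule.mem_sup_right (smul_radSMul_mem 𝒜 h𝒜 k hm j hj))
      exact Submodule.mem_sup_left ⟨j • p, by rw [map_smul]⟩
    have hrange : ∀ k : ℕ, 1 ≤ k → LinearMap.range h ⊔ NpowM 𝒜 Q k = ⊤ := by
      intro k hk
      induction k with
      | zero => omega
      | succ k ihk =>
          rcases Nat.lt_or_ge 0 k with hk0 | hk0
          · have htop := ihk hk0
            rw [eq_top_iff, ← htop]
            exact sup_le le_sup_left (hstep k)
          · interval_cases k
            rw [NpowM_one]
            exact hbase
    have hhsurj : Function.Surjective h := by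
      have h1 := hrange n hn1
      rw [NpowM_bot 𝒜 Q hnbot, sup_bot_eq] at h1
      exact LinearMap.range_eq_top.1 h1
    -- graded splitting
    obtain ⟨s, sdeg, hs⟩ := hQproj P Q Pgr Qgr hP hQ h hhsurj hdeg LinearMap.id
      (fun g x hx => hx)
    have hsid : ∀ q : Q, h (s q) = q := fun q => LinearMap.congr_fun hs q
    have hker : LinearMap.ker h ≤ radSMul 𝒜 P := by
      intro x hx
      have h3 : ebar ((radSMul 𝒜 P).mkQ x) = 0 := by
        rw [← hcomp' x, LinearMap.mem_ker.1 hx, map_zero]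
      have h4 : (radSMul 𝒜 P).mkQ x = 0 := by
        apply ebar.injective
        rw [h3, map_zero]
      rwa [Submodule.mkQ_apply, Submodule.Quotient.mk_eq_zero] at h4
    set θ : P →ₗ[R] P := LinearMap.id - s.comp h with hθdef
    have hθker : ∀ p : P, θ p ∈ LinearMap.ker h := by
      intro p
      rw [LinearMap.mem_ker, hθdef]
      simp only [LinearMap.sub_apply, LinearMap.id_apply, LinearMap.comp_apply, map_sub]
      rw [hsid (h p), sub_self]
    have hθfix : ∀ p ∈ LinearMap.ker h, θ p = p := by
      intro p hp
      rw [hθdef]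
      simp only [LinearMap.sub_apply, LinearMap.id_apply, LinearMap.comp_apply]
      rw [LinearMap.mem_ker.1 hp, map_zero, sub_zero]
    have hθrad : ∀ p : P, θ p ∈ radSMul 𝒜 P := fun p => hker (hθker p)
    have hkerind : ∀ k : ℕ, 1 ≤ k → LinearMap.ker h ≤ NpowM 𝒜 P k := by
      intro k hk
      induction k with
      | zero => omega
      | succ k ihk =>
          rcases Nat.lt_or_ge 0 k with hk0 | hk0
          · intro x hx
            have hxN : x ∈ NpowM 𝒜 P k := ihk hk0 hx
            rw [← hθfix x hx]
            clear hx
            induction hxN using Submodule.span_induction with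
            | mem y hy =>
                obtain ⟨j, hj, p, rfl⟩ := hy
                rw [map_smul]
                exact smul_radSMul_mem 𝒜 h𝒜 k (hθrad p) j hj
            | zero => rw [map_zero]; exact Submodule.zero_mem _
            | add y z _ _ ihy ihz => rw [map_add]; exact Submodule.add_mem _ ihy ihz
            | smul c y _ ihy => rw [map_smul]; exact Submodule.smul_mem _ _ ihy
          · interval_cases k
            rw [NpowM_one]
            exact hker
    have hkerbot : LinearMap.ker h = ⊥ := by
      rw [eq_bot_iff, ← NpowM_bot 𝒜 P hnbot]
      exact hkerind n hn1
    have hbij : Function.Bijective h := ⟨LinearMap.ker_eq_bot.1 hkerbot, hhsurj⟩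
    refine ⟨LinearEquiv.ofBijective h hbij, ?_⟩
    intro g x
    simp only [LinearEquiv.ofBijective_apply]
    constructor
    · intro hx
      exact hdeg g x hx
    · intro hhx
      obtain ⟨sfin, hnotin, hxsum⟩ := gproj_sum Pgr hP.2 x
      have hQg : gproj Qgr hQ.2 g (h x) = h x := gproj_of_mem_same Qgr hQ.2 hhx
      have h5 : gproj Qgr hQ.2 g (h x) = if g ∈ sfin then h (gproj Pgr hP.2 g x) else 0 := by
        rw [show h x = ∑ k ∈ sfin, h (gproj Pgr hP.2 k x) from by rw [← map_sum, ← hxsum],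
          map_sum,
          show (∑ k ∈ sfin, gproj Qgr hQ.2 g (h (gproj Pgr hP.2 k x)))
            = ∑ k ∈ sfin, if g = k then h (gproj Pgr hP.2 k x) else 0 from
          Finset.sum_congr rfl fun k _ =>
            gproj_of_mem Qgr hQ.2 (hdeg k _ (gproj_mem _ _ _ _)) g,
          Finset.sum_ite_eq sfin g _]
      rw [hQg] at h5
      by_cases hgs : g ∈ sfin
      · rw [if_pos hgs] at h5
        have h6 : x = gproj Pgr hP.2 g x := hbij.1 h5
        rw [h6]
        exact gproj_mem _ _ _ _
      · rw [if_neg hgs] at h5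
        have h6 : x = 0 := hbij.1 (by rw [h5, map_zero])
        rw [h6]
        exact zero_mem _
end
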